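/- arXiv:2011.02805 — 12 statements merged into one kernel-verified Lean document; each statement's English description precedes it below -/
import Mathlib

section
/- Let m ≥ 2, n = 2^m − 1, and let r be a positive integer with (r+1) | n. Let C be the binary cyclic code of length n with defining set of exponents Z = {j(r+1) : j = 0, 1, …, n/(r+1) − 1}. Then C is an LCD code, i.e., C ∩ C^⊥ = {0}. -/
/-- The cyclic code of length `n` with defining set of exponents `Z`:
codewords have entries in the field `K`, and parity checks are computed in
the field `F` via the ring homomorphism `φ`, using powers of `α`. -/
def cyclicCode {K F : Type*} [Field K] [Field F] (φ : K →+* F) (n : ℕ) (α : F)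
    (Z : Set ℕ) : Submodule K (Fin n → K) where
  carrier := {c | ∀ z ∈ Z, ∑ i : Fin n, φ (c i) * α ^ ((i : ℕ) * z) = 0}
  add_mem' := by
    intro a b ha hb z hz
    have h : (∑ i : Fin n, φ ((a + b) i) * α ^ ((i : ℕ) * z))
        = (∑ i : Fin n, φ (a i) * α ^ ((i : ℕ) * z))
          + ∑ i : Fin n, φ (b i) * α ^ ((i : ℕ) * z) := by
      rw [← Finset.sum_add_distrib]
      refine Finset.sum_congr rfl fun i _ => ?_
      simp [add_mul]
    rw [h, ha z hz, hb z hz, add_zero]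
  zero_mem' := by intro z hz; simp
  smul_mem' := by
    intro c a ha z hz
    have h : (∑ i : Fin n, φ ((c • a) i) * α ^ ((i : ℕ) * z))
        = φ c * ∑ i : Fin n, φ (a i) * α ^ ((i : ℕ) * z) := by
      rw [Finset.mul_sum]
      refine Finset.sum_congr rfl fun i _ => ?_
      simp [mul_assoc]
    rw [h, ha z hz, mul_zero]

/-- The dual of a code: all vectors orthogonal to every codeword. -/
def dualCode {K : Type*} [Field K] {n : ℕ} (C : Set (Fin n → K)) : Set (Fin n → K) :=
  {x | ∀ c ∈ C, ∑ i : Fin n, x i * c i = 0}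

/-- A linear code is LCD if its intersection with its dual is `{0}`. -/
def IsLCD {K : Type*} [Field K] {n : ℕ} (C : Submodule K (Fin n → K)) : Prop :=
  (C : Set (Fin n → K)) ∩ dualCode (C : Set (Fin n → K)) = {0}

/-- A code has locality `r` if every coordinate position `i` is recoverable as a fixed
linear combination of at most `r` other coordinate positions, uniformly over all codewords. -/
def HasLocality {K : Type*} [Field K] {n : ℕ} (C : Set (Fin n → K)) (r : ℕ) : Prop :=
  ∀ i : Fin n, ∃ (R : Finset (Fin n)) (lam : Fin n → K),
    i ∉ R ∧ R.card ≤ r ∧ ∀ c ∈ C, c i = ∑ j ∈ R, lam j * c j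

/-- The `q`-cyclotomic coset of `a` modulo `n`:
`[a] = {a·q^j mod n : j = 0, 1, 2, …}` (natural number version). -/
def cycCoset (q n a : ℕ) : Set ℕ := {b | ∃ j : ℕ, b = a * q ^ j % n}

/-!
Let `x ∈ C ∩ C^⊥` and consider its transform `T t = ∑ i, x i * α ^ (i * t)`; by a
Vandermonde argument `x = 0` as soon as `T t = 0` for all `t < n`. For `t ∈ Z` this is
membership of `x` in `C`. For the other `t`, the trace vectors `i ↦ Tr (β * α ^ (i * t))`
lie in `C` as long as no `t * q ^ k + z` with `z ∈ Z` is divisible by `n`; orthogonality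
of `x` to them gives `Tr (β * T t) = 0` for every `β`, and nondegeneracy of the trace form
forces `T t = 0`. When `Z` consists of the multiples of `r + 1` and `q = 2`, this
divisibility condition holds for every `t` not divisible by `r + 1`, because `r + 1`
divides the odd number `n`.
-/

open Finset

section CyclicCode

variable {F : Type*} [Field F] {n : ℕ} {α : F}

lemma sum_pow_mul_eq_zero_of_not_dvd (hα : orderOf α = n) {u : ℕ} (hu : ¬ n ∣ u) :
    ∑ i : Fin n, α ^ ((i : ℕ) * u) = 0 := by
  have hne : α ^ u ≠ 1 := fun h => hu (hα ▸ orderOf_dvd_of_pow_eq_one h)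
  have hpow : (α ^ u) ^ n = 1 := by
    rw [← pow_mul, mul_comm, pow_mul, ← hα, pow_orderOf_eq_one, one_pow]
  simp_rw [mul_comm _ u, pow_mul]
  rw [Fin.sum_univ_eq_sum_range (fun i => (α ^ u) ^ i), geom_sum_eq hne, hpow, sub_self, zero_div]

lemma eq_zero_of_forall_sum_mul_pow_eq_zero (hα : orderOf α = n) {y : Fin n → F}
    (hy : ∀ t < n, ∑ i : Fin n, y i * α ^ ((i : ℕ) * t) = 0) : y = 0 := by
  classical
  set v : Fin n → F := fun i => α ^ (i : ℕ)
  have hv : Function.Injective v := fun i j h =>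
    Fin.ext (pow_injOn_Iio_orderOf (by simp [hα]) (by simp [hα]) h)
  refine Matrix.eq_zero_of_mulVec_eq_zero (M := (Matrix.vandermonde v).transpose) ?_ ?_
  · rwa [Matrix.det_transpose, Matrix.det_vandermonde_ne_zero_iff]
  · ext t
    simpa [Matrix.mulVec, dotProduct, v, mul_comm, ← pow_mul] using hy t t.isLt

variable {K : Type*} [Field K] [Finite F] [Algebra K F]

lemma trace_pow_mem_cyclicCode (hα : orderOf α = n) {Z : Set ℕ} {t : ℕ}
    (ht : ∀ z ∈ Z, ∀ k, ¬ n ∣ t * Nat.card K ^ k + z) (β : F) :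
    (fun i : Fin n => Algebra.trace K F (β * α ^ ((i : ℕ) * t))) ∈
      cyclicCode (algebraMap K F) n α Z := by
  intro z hz
  calc ∑ i : Fin n,
        algebraMap K F (Algebra.trace K F (β * α ^ ((i : ℕ) * t))) * α ^ ((i : ℕ) * z)
      = ∑ k ∈ range (Module.finrank K F), β ^ Nat.card K ^ k *
          ∑ i : Fin n, α ^ ((i : ℕ) * (t * Nat.card K ^ k + z)) := by
        simp_rw [FiniteField.algebraMap_trace_eq_sum_pow, sum_mul, mul_sum]
        rw [sum_comm]
        refine sum_congr rfl fun k _ => sum_congr rfl fun i _ => ?_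
        rw [mul_pow, ← pow_mul, mul_assoc, ← pow_add]
        ring_nf
    _ = 0 := sum_eq_zero fun k _ => by rw [sum_pow_mul_eq_zero_of_not_dvd hα (ht z hz k), mul_zero]

lemma sum_algebraMap_mul_pow_eq_zero_of_mem_dualCode {C : Set (Fin n → K)} {x : Fin n → K}
    (hx : x ∈ dualCode C) {t : ℕ}
    (hC : ∀ β : F, (fun i : Fin n => Algebra.trace K F (β * α ^ ((i : ℕ) * t))) ∈ C) :
    ∑ i : Fin n, algebraMap K F (x i) * α ^ ((i : ℕ) * t) = 0 := by
  have := Fintype.ofFinite F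
  refine (traceForm_nondegenerate K F).1 _ fun β => ?_
  have h := hx _ (hC β)
  rw [Algebra.traceForm_apply, sum_mul, map_sum, ← h]
  refine sum_congr rfl fun i _ => ?_
  rw [show algebraMap K F (x i) * α ^ ((i : ℕ) * t) * β = x i • (β * α ^ ((i : ℕ) * t)) by
    rw [Algebra.smul_def]; ring, map_smul, smul_eq_mul]

theorem isLCD_cyclicCode (hα : orderOf α = n) {Z : Set ℕ}
    (hZ : ∀ t < n, t ∈ Z ∨ ∀ z ∈ Z, ∀ k, ¬ n ∣ t * Nat.card K ^ k + z) :
    IsLCD (cyclicCode (algebraMap K F) n α Z) := by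
  refine Set.eq_singleton_iff_unique_mem.mpr ⟨⟨zero_mem _, fun c _ => by simp⟩, ?_⟩
  rintro x ⟨hxC, hxD⟩
  have hy : (fun i => algebraMap K F (x i)) = 0 := by
    refine eq_zero_of_forall_sum_mul_pow_eq_zero hα fun t htn => ?_
    rcases hZ t htn with htZ | ht
    · exact hxC t htZ
    · exact sum_algebraMap_mul_pow_eq_zero_of_mem_dualCode hxD
        (trace_pow_mem_cyclicCode hα ht)
  funext i
  exact (algebraMap K F).injective (by simpa using congrFun hy i)

end CyclicCode

theorem stmt3_general (m : ℕ) (n : ℕ) (hn : n = 2 ^ m - 1)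
    (F : Type*) [Field F] [Fintype F] [CharP F 2]
    (α : F) (hα : orderOf α = n)
    (r : ℕ) (hrn : r + 1 ∣ n) :
    IsLCD (cyclicCode (ZMod.castHom (dvd_refl 2) F) n α
      {z | ∃ j < n / (r + 1), z = j * (r + 1)}) := by
  let _ : Algebra (ZMod 2) F := ZMod.algebra F 2
  rw [Subsingleton.elim (ZMod.castHom (dvd_refl 2) F) (algebraMap (ZMod 2) F)]
  refine isLCD_cyclicCode hα fun t htn => ?_
  by_cases ht : r + 1 ∣ t
  · exact Or.inl
      ⟨t / (r + 1), Nat.div_lt_div_of_lt_of_dvd hrn htn, (Nat.div_mul_cancel ht).symm⟩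
  refine Or.inr fun z ⟨j, _, hz⟩ k hdvd => ht ?_
  have hm : m ≠ 0 := by rintro rfl; simp [hn] at htn
  have hn_odd : Odd n :=
    hn ▸ Nat.Even.sub_odd Nat.one_le_two_pow (Nat.even_pow.mpr ⟨even_two, hm⟩) odd_one
  have hcop : (r + 1).Coprime (2 ^ k) :=
    (Nat.coprime_two_right.mpr (hn_odd.of_dvd_nat hrn)).pow_right k
  rw [Nat.card_zmod, hz] at hdvd
  exact hcop.dvd_of_dvd_mul_right ((Nat.dvd_add_left (dvd_mul_left _ j)).mp (hrn.trans hdvd))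

/-- Construction 1 of Goparaju et al.: the binary cyclic code of length `n = 2^m − 1`
with defining set of exponents `{j(r+1) : j = 0, …, n/(r+1) − 1}` is an LCD code. -/
theorem stmt3 (m : ℕ) (hm : 2 ≤ m) (n : ℕ) (hn : n = 2 ^ m - 1)
    (F : Type*) [Field F] [Fintype F] [CharP F 2] (hcard : Fintype.card F = 2 ^ m)
    (α : F) (hα : orderOf α = n)
    (r : ℕ) (hr : 0 < r) (hrn : r + 1 ∣ n) :
    IsLCD (cyclicCode (ZMod.castHom (dvd_refl 2) F) n α
      {z | ∃ j < n / (r + 1), z = j * (r + 1)}) :=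
  stmt3_general m n hn F α hα r hrn
end

section
/- Let m ≥ 2, n = 2^m − 1, and let r be a positive integer with (r+1) | n. Let C be the binary cyclic code of length n with defining set of exponents Z = {j(r+1) : j = 0, 1, …, n/(r+1) − 1}. Then C has locality r: for every coordinate position i there exist a set R ⊆ {0, …, n−1}\{i} with |R| ≤ r and scalars (λ_j)_{j∈R} in F_2 such that c_i = Σ_{j∈R} λ_j c_j for every codeword c ∈ C. -/
/-!
Put `β = α ^ (r + 1)`, an element of order `s = n / (r + 1)`; the parity checks of the code say
`∑ i, c i * β ^ (i * j) = 0` for `j < s`. Twisting the `j`-th check by `β ^ (-k * j)` and summing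
over `j`, the orthogonality relation `∑ j < s, β ^ (e * j) = s * [s ∣ e]` leaves
`s * ∑ {c i | i ≡ k [MOD s]} = 0`. As `n` is odd, so is `s`, hence each residue class mod `s`,
which has `r + 1` elements, carries a parity check, and every coordinate is the sum of the
other `r` coordinates of its class.
-/

open Finset

section RootsOfUnity

variable {F : Type*} [Field F]

theorem sum_range_orderOf_div_pow_eq_ite (β : F) (a b : ℕ) :
    ∑ j ∈ range (orderOf β), (β ^ a / β ^ b) ^ j =
      if a ≡ b [MOD orderOf β] then (orderOf β : F) else 0 := by
  rcases (orderOf β).eq_zero_or_pos with h | h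
  · simp [h]
  have hβ : IsOfFinOrder β := orderOf_pos_iff.1 h
  have hdiv : β ^ a / β ^ b = 1 ↔ a ≡ b [MOD orderOf β] :=
    (div_eq_one_iff_eq (pow_ne_zero _ hβ.isUnit.ne_zero)).trans hβ.pow_eq_pow_iff_modEq
  split_ifs with hab
  · simp [hdiv.2 hab]
  · have hx : β ^ a / β ^ b ≠ 1 := hab ∘ hdiv.1
    have hgeom := mul_geom_sum (β ^ a / β ^ b) (orderOf β)
    rw [div_pow, pow_right_comm, pow_right_comm β b, pow_orderOf_eq_one, one_pow, one_pow,
      div_one, sub_self] at hgeom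
    exact (mul_eq_zero.1 hgeom).resolve_left (sub_ne_zero.2 hx)

theorem orderOf_mul_sum_filter_modEq_eq_zero {n : ℕ} {β : F} (v : Fin n → F)
    (h : ∀ j < orderOf β, ∑ i, v i * (β ^ (i : ℕ)) ^ j = 0) (k : ℕ) :
    (orderOf β : F) * ∑ i ∈ {i : Fin n | (i : ℕ) ≡ k [MOD orderOf β]}, v i = 0 := by
  calc (orderOf β : F) * ∑ i ∈ {i : Fin n | (i : ℕ) ≡ k [MOD orderOf β]}, v i
      = ∑ i, v i * ∑ j ∈ range (orderOf β), (β ^ (i : ℕ) / β ^ k) ^ j := by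
        rw [sum_filter, mul_sum]
        refine sum_congr rfl fun i _ => ?_
        rw [sum_range_orderOf_div_pow_eq_ite]
        split_ifs <;> ring
    _ = ∑ j ∈ range (orderOf β), (β ^ k)⁻¹ ^ j * ∑ i, v i * (β ^ (i : ℕ)) ^ j := by
        simp_rw [mul_sum]
        rw [sum_comm]
        refine sum_congr rfl fun j _ => sum_congr rfl fun i _ => ?_
        rw [div_pow, div_eq_mul_inv, inv_pow]
        ring
    _ = 0 := sum_eq_zero fun j hj => by rw [h j (mem_range.1 hj), mul_zero]

end RootsOfUnity

theorem Fin.card_filter_val_modEq {n s : ℕ} (hs : 0 < s) (hsn : s ∣ n) (k : ℕ) :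
    #{i : Fin n | (i : ℕ) ≡ k [MOD s]} = n / s := by
  have h := Nat.count_modEq_card n hs k
  rwa [Nat.count_eq_card_filter_range, Nat.mod_eq_zero_of_dvd hsn, if_neg (Nat.not_lt_zero _),
    add_zero, ← Nat.Iio_eq_range, ← Fin.map_valEmbedding_univ, filter_map, card_map] at h

theorem hasLocality_of_forall_sum_eq_zero {K : Type*} [Field K] {n r : ℕ} {C : Set (Fin n → K)}
    (S : Fin n → Finset (Fin n)) (hmem : ∀ i, i ∈ S i) (hcard : ∀ i, #(S i) ≤ r + 1)
    (hsum : ∀ i, ∀ c ∈ C, ∑ j ∈ S i, c j = 0) : HasLocality C r := by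
  intro i
  refine ⟨(S i).erase i, fun _ => -1, notMem_erase i _, ?_, fun c hc => ?_⟩
  · have := card_erase_of_mem (hmem i)
    have := hcard i
    omega
  · have := hsum i c hc
    rw [← add_sum_erase _ _ (hmem i)] at this
    simp only [neg_one_mul, sum_neg_distrib]
    linear_combination this

section CyclicCode

variable {K F : Type*} [Field K] [Field F] (φ : K →+* F) {n : ℕ} {α : F}

theorem sum_mul_pow_pow_eq_zero_of_mem_cyclicCode {s r : ℕ} {c : Fin n → K}
    (hc : c ∈ cyclicCode φ n α {z | ∃ j < s, z = j * (r + 1)}) {j : ℕ} (hj : j < s) :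
    ∑ i, φ (c i) * ((α ^ (r + 1)) ^ (i : ℕ)) ^ j = 0 := by
  rw [← hc _ ⟨j, hj, rfl⟩]
  refine sum_congr rfl fun i _ => ?_
  rw [← pow_mul, ← pow_mul]
  ring_nf

theorem hasLocality_cyclicCode {s r : ℕ} (hsn : s * (r + 1) = n) (hα : orderOf α = n)
    (hs : (s : K) ≠ 0) :
    HasLocality (cyclicCode φ n α {z | ∃ j < s, z = j * (r + 1)} : Set (Fin n → K)) r := by
  have hs0 : 0 < s := Nat.pos_of_ne_zero (by rintro rfl; simp at hs)
  have hβ : orderOf (α ^ (r + 1)) = s := by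
    rw [orderOf_pow_of_dvd r.succ_ne_zero (hα ▸ Dvd.intro_left s hsn), hα, ← hsn,
      Nat.mul_div_cancel _ r.succ_pos]
  refine hasLocality_of_forall_sum_eq_zero (fun i => {j | (j : ℕ) ≡ i [MOD s]})
    (fun i => (mem_filter_univ i).2 rfl) (fun i => ?_) fun i c hc => ?_
  · rw [Fin.card_filter_val_modEq hs0 (Dvd.intro _ hsn), ← hsn, Nat.mul_div_cancel_left _ hs0]
  · have h := orderOf_mul_sum_filter_modEq_eq_zero (fun i => φ (c i))
      (fun j hj => sum_mul_pow_pow_eq_zero_of_mem_cyclicCode φ hc (hβ ▸ hj)) i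
    rw [hβ, ← map_natCast φ, ← map_sum, ← map_mul, map_eq_zero] at h
    exact (mul_eq_zero.1 h).resolve_left hs

end CyclicCode

theorem stmt5_general (m : ℕ) (n : ℕ) (hn : n = 2 ^ m - 1)
    (F : Type*) [Field F] [CharP F 2]
    (α : F) (hα : orderOf α = n)
    (r : ℕ) (hrn : r + 1 ∣ n) :
    HasLocality
      (↑(cyclicCode (ZMod.castHom (dvd_refl 2) F) n α
        {z | ∃ j < n / (r + 1), z = j * (r + 1)}) : Set (Fin n → ZMod 2)) r := by
  rcases n.eq_zero_or_pos with rfl | hn0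
  · exact fun i => i.elim0
  have hm : m ≠ 0 := by
    rintro rfl
    exact hn0.ne' hn
  have hn_odd : Odd n :=
    hn ▸ Nat.Even.sub_odd Nat.one_le_two_pow ((Nat.even_pow' hm).2 even_two) odd_one
  exact hasLocality_cyclicCode _ (Nat.div_mul_cancel hrn) hα
    (ZMod.natCast_ne_zero_iff_odd.2 (hn_odd.of_dvd_nat (Nat.div_dvd_of_dvd hrn)))

/-- Construction 1 of Goparaju et al.: the binary cyclic code of length `n = 2^m − 1`
with defining set of exponents `{j(r+1) : j = 0, …, n/(r+1) − 1}` has locality `r`. -/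
theorem stmt5 (m : ℕ) (hm : 2 ≤ m) (n : ℕ) (hn : n = 2 ^ m - 1)
    (F : Type*) [Field F] [Fintype F] [CharP F 2] (hcard : Fintype.card F = 2 ^ m)
    (α : F) (hα : orderOf α = n)
    (r : ℕ) (hr : 0 < r) (hrn : r + 1 ∣ n) :
    HasLocality
      (↑(cyclicCode (ZMod.castHom (dvd_refl 2) F) n α
        {z | ∃ j < n / (r + 1), z = j * (r + 1)}) : Set (Fin n → ZMod 2)) r :=
  stmt5_general m n hn F α hα r hrn
end

section
/- Let m ≥ 3, n = 2^m − 1, and let r be a positive integer with (r+1) | n. Let C be the binary cyclic code of length n with defining set of exponents Z = {j(r+1) : j = 0, 1, …, n/(r+1) − 1} ∪ [1] ∪ [n−1], where [1] and [n−1] are the 2-cyclotomic cosets of 1 and n−1 modulo n. Then every nonzero codeword of C has Hamming weight at least 6. -/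
/-- Construction 2: the binary cyclic code of length `n = 2^m − 1` with defining set of
exponents `{j(r+1) : j = 0, …, n/(r+1) − 1} ∪ [1] ∪ [n−1]` has minimum distance at
least `6`: every nonzero codeword has Hamming weight at least `6`. -/
theorem stmt7 (m : ℕ) (hm : 3 ≤ m) (n : ℕ) (hn : n = 2 ^ m - 1)
    (F : Type*) [Field F] [Fintype F] [CharP F 2] (hcard : Fintype.card F = 2 ^ m)
    (α : F) (hα : orderOf α = n)
    (r : ℕ) (hr : 0 < r) (hrn : r + 1 ∣ n) :
    ∀ c ∈ cyclicCode (ZMod.castHom (dvd_refl 2) F) n α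
      ({z | ∃ j < n / (r + 1), z = j * (r + 1)} ∪ cycCoset 2 n 1 ∪ cycCoset 2 n (n - 1)),
      c ≠ 0 → 6 ≤ hammingNorm c := by
  intro c hc hc0
  classical
  set φ := ZMod.castHom (dvd_refl 2) F with hφdef
  have hn7 : 7 ≤ n := by
    have h8 : (2:ℕ) ^ 3 ≤ 2 ^ m := Nat.pow_le_pow_right (by norm_num) hm
    omega
  have hnpos : 0 < n := by omega
  have hα1 : α ^ n = 1 := by rw [← hα]; exact pow_orderOf_eq_one α
  have hαne : α ≠ 0 := by
    intro h; rw [h, zero_pow (by omega : n ≠ 0)] at hα1; exact one_ne_zero hα1.symm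
  have hpow : ∀ a b : ℕ, a ≡ b [MOD n] → α ^ a = α ^ b := by
    intro a b h
    rw [← pow_mod_orderOf α a, ← pow_mod_orderOf α b, hα]
    exact congrArg (α ^ ·) h
  have hone : ∀ d : ℕ, 0 < d → d < n → α ^ d ≠ 1 := by
    intro d hd1 hd2 h
    have := Nat.le_of_dvd hd1 (hα ▸ orderOf_dvd_of_pow_eq_one h)
    omega
  have hinj : ∀ a b : ℕ, a < n → b < n → α ^ a = α ^ b → a = b := by
    have aux : ∀ a b : ℕ, a < b → b < n → α ^ a = α ^ b → False := by
      intro a b hab hb h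
      apply hone (b - a) (by omega) (by omega)
      have h2 : α ^ a * α ^ (b - a) = α ^ a * 1 := by
        rw [← pow_add, mul_one]
        have hba : a + (b - a) = b := by omega
        rw [hba]
        exact h.symm
      exact mul_left_cancel₀ (pow_ne_zero a hαne) h2
    intro a b ha hb hab
    rcases Nat.lt_trichotomy a b with h | h | h
    · exact absurd (aux a b h hb hab) (not_false)
    · exact h
    · exact absurd (aux b a h ha hab.symm) (not_false)
  -- membership of the five consecutive exponents
  have hZ : ∀ t : ℕ, t ≤ 4 → (n - 2 + t) % n ∈
      ({z | ∃ j < n / (r + 1), z = j * (r + 1)} ∪ cycCoset 2 n 1 ∪ cycCoset 2 n (n - 1)) := by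
    intro t ht
    interval_cases t
    · -- n - 2 ∈ [n-1]
      right
      refine ⟨1, ?_⟩
      have h1 : (n - 1) * 2 ^ 1 = n + (n - 2) := by omega
      have h2 : (n - 2 + 0) % n = n - 2 := Nat.mod_eq_of_lt (by omega)
      rw [h2, h1, Nat.add_mod_left, Nat.mod_eq_of_lt (by omega)]
    · -- n - 1 ∈ [n-1]
      right
      refine ⟨0, ?_⟩
      have h2 : (n - 2 + 1) % n = n - 1 := by
        have : n - 2 + 1 = n - 1 := by omega
        rw [this]; exact Nat.mod_eq_of_lt (by omega)
      rw [h2, pow_zero, mul_one, Nat.mod_eq_of_lt (by omega)]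
    · -- 0 is a multiple of r + 1
      left; left
      have h2 : (n - 2 + 2) % n = 0 := by
        have : n - 2 + 2 = n := by omega
        rw [this, Nat.mod_self]
      rw [h2]
      exact ⟨0, Nat.div_pos (Nat.le_of_dvd hnpos hrn) (by omega), by simp⟩
    · -- 1 ∈ [1]
      left; right
      refine ⟨0, ?_⟩
      have h2 : (n - 2 + 3) % n = 1 := by
        have : n - 2 + 3 = n + 1 := by omega
        rw [this, Nat.add_mod_left, Nat.mod_eq_of_lt (by omega)]
      rw [h2, pow_zero, mul_one, Nat.mod_eq_of_lt (by omega)]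
    · -- 2 ∈ [1]
      left; right
      refine ⟨1, ?_⟩
      have h2 : (n - 2 + 4) % n = 2 := by
        have : n - 2 + 4 = n + 2 := by omega
        rw [this, Nat.add_mod_left, Nat.mod_eq_of_lt (by omega)]
      rw [h2, pow_one, one_mul, Nat.mod_eq_of_lt (by omega)]
  by_contra hlt
  push_neg at hlt
  set S : Finset (Fin n) := Finset.univ.filter (fun i => c i ≠ 0) with hSdef
  have hScard : S.card = hammingNorm c := rfl
  have hS5 : S.card ≤ 5 := by omega
  have hφinj : Function.Injective φ := φ.injective
  have hφne : ∀ i ∈ S, φ (c i) ≠ 0 := by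
    intro i hi h
    have : c i = 0 := hφinj (by simpa using h)
    simp only [hSdef, Finset.mem_filter] at hi
    exact hi.2 this
  -- the five parity-check equations, rearranged
  have key : ∀ t : ℕ, t ≤ 4 →
      ∑ i ∈ S, (φ (c i) * α ^ ((i : ℕ) * (n - 2))) * (α ^ (i : ℕ)) ^ t = 0 := by
    intro t ht
    have h0 := hc _ (hZ t ht)
    have hterm : ∀ i : Fin n,
        φ (c i) * α ^ ((i : ℕ) * ((n - 2 + t) % n))
          = (φ (c i) * α ^ ((i : ℕ) * (n - 2))) * (α ^ (i : ℕ)) ^ t := by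
      intro i
      have hmod : (i : ℕ) * ((n - 2 + t) % n) ≡ (i : ℕ) * (n - 2 + t) [MOD n] :=
        Nat.ModEq.mul_left _ (Nat.mod_modEq _ _)
      have hα2 : α ^ ((i : ℕ) * ((n - 2 + t) % n)) = α ^ ((i : ℕ) * (n - 2 + t)) :=
        hpow _ _ hmod
      rw [hα2, mul_assoc, ← pow_mul, ← pow_add, ← Nat.mul_add]
    have hsub : ∑ i ∈ S, (φ (c i) * α ^ ((i : ℕ) * (n - 2))) * (α ^ (i : ℕ)) ^ t
        = ∑ i : Fin n, (φ (c i) * α ^ ((i : ℕ) * (n - 2))) * (α ^ (i : ℕ)) ^ t := by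
      refine Finset.sum_subset (Finset.subset_univ S) ?_
      intro i _ hiS
      have : c i = 0 := by
        by_contra h
        exact hiS (by simp [hSdef, h])
      simp [this]
    rw [hsub, ← Finset.sum_congr rfl (fun i _ => hterm i)]
    exact h0
  -- Vandermonde argument
  set w := S.card with hw
  let e : Fin w ≃ {x // x ∈ S} := S.equivFin.symm
  set f : Fin w → F := fun k => α ^ (((e k : Fin n)) : ℕ) with hf
  set v : Fin w → F := fun k =>
    φ (c (e k)) * α ^ ((((e k : Fin n)) : ℕ) * (n - 2)) with hv
  have hfinj : Function.Injective f := by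
    intro a b hab
    have h2 : (((e a : Fin n)) : ℕ) = (((e b : Fin n)) : ℕ) :=
      hinj _ _ (e a : Fin n).isLt (e b : Fin n).isLt hab
    exact e.injective (Subtype.ext (Fin.ext h2))
  have hv0 : v = 0 := by
    refine Matrix.eq_zero_of_forall_pow_sum_mul_pow_eq_zero hfinj ?_
    intro t
    have ht4 : (t : ℕ) ≤ 4 := by
      have := t.isLt
      omega
    have hkey := key t ht4
    have hconv : ∑ j : Fin w, v j * f j ^ (t : ℕ)
        = ∑ i ∈ S, (φ (c i) * α ^ ((i : ℕ) * (n - 2))) * (α ^ (i : ℕ)) ^ (t : ℕ) := by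
      rw [← Finset.sum_coe_sort S
        (fun i => (φ (c i) * α ^ ((i : ℕ) * (n - 2))) * (α ^ (i : ℕ)) ^ (t : ℕ))]
      exact Equiv.sum_comp e
        (fun x : {x // x ∈ S} =>
          (φ (c x) * α ^ (((x : Fin n) : ℕ) * (n - 2))) * (α ^ ((x : Fin n) : ℕ)) ^ (t : ℕ))
    rw [hconv]
    exact hkey
  -- contradiction: S is nonempty
  obtain ⟨i0, hi0⟩ : ∃ i, c i ≠ 0 := Function.ne_iff.mp hc0
  have hi0S : i0 ∈ S := by simp [hSdef, hi0]
  have hk : v (S.equivFin ⟨i0, hi0S⟩) ≠ 0 := by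
    have he : e (S.equivFin ⟨i0, hi0S⟩) = ⟨i0, hi0S⟩ := S.equivFin.symm_apply_apply _
    rw [hv]
    simp only [he]
    exact mul_ne_zero (hφne i0 hi0S) (pow_ne_zero _ hαne)
  rw [hv0] at hk
  exact hk rfl
end

section
/- Let m ≥ 3, n = 2^m − 1, and let r be a positive integer with (r+1) | n. Let C be the binary cyclic code of length n with defining set of exponents Z = {j(r+1) : j = 0, 1, …, n/(r+1) − 1} ∪ [1] ∪ [n−1], where [1] and [n−1] are the 2-cyclotomic cosets of 1 and n−1 modulo n. Then the dimension of C as an F_2-vector space equals r(2^m − 1)/(r+1) − 2m. -/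
section Aux
open Polynomial

lemma finrank_degLT_inf_span {K : Type*} [Field K] (g : K[X]) (hg : g.Monic) (n : ℕ)
    (hdn : g.natDegree ≤ n) :
    Module.finrank K ↥(degreeLT K n ⊓ (Ideal.span {g}).restrictScalars K) =
      n - g.natDegree := by
  classical
  set d := g.natDegree with hd
  set μ : K[X] →ₗ[K] K[X] := LinearMap.mulLeft K g with hμ
  have hμinj : Function.Injective μ := fun a b hab => by
    simpa [μ, LinearMap.mulLeft_apply] using
      mul_left_cancel₀ hg.ne_zero hab
  have hmap : (degreeLT K (n - d)).map μ =
      degreeLT K n ⊓ (Ideal.span {g}).restrictScalars K := by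
    apply le_antisymm
    · rintro p ⟨q, hq, rfl⟩
      rw [SetLike.mem_coe, Polynomial.mem_degreeLT] at hq
      refine Submodule.mem_inf.mpr ⟨?_, ?_⟩
      · rw [Polynomial.mem_degreeLT]
        simp only [μ, LinearMap.mulLeft_apply]
        rcases eq_or_ne q 0 with rfl | hq0
        · simp only [mul_zero, degree_zero]; exact_mod_cast WithBot.bot_lt_coe n
        · have hndq : q.natDegree < n - d :=
            (Polynomial.natDegree_lt_iff_degree_lt hq0).mpr hq
          have hne : g * q ≠ 0 := mul_ne_zero hg.ne_zero hq0
          rw [← Polynomial.natDegree_lt_iff_degree_lt hne,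
            Polynomial.natDegree_mul hg.ne_zero hq0]
          omega
      · exact (Submodule.restrictScalars_mem ..).mpr (Ideal.mem_span_singleton.mpr ⟨q, rfl⟩)
    · rintro p ⟨hp1, hp2⟩
      rw [SetLike.mem_coe, Polynomial.mem_degreeLT] at hp1
      obtain ⟨q, rfl⟩ := Ideal.mem_span_singleton.mp ((Submodule.restrictScalars_mem ..).mp hp2)
      refine ⟨q, ?_, rfl⟩
      rw [SetLike.mem_coe, Polynomial.mem_degreeLT]
      rcases eq_or_ne q 0 with rfl | hq0
      · simp only [degree_zero]; exact_mod_cast WithBot.bot_lt_coe (n - d)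
      · have hne : g * q ≠ 0 := mul_ne_zero hg.ne_zero hq0
        have := (Polynomial.natDegree_lt_iff_degree_lt hne).mpr hp1
        rw [Polynomial.natDegree_mul hg.ne_zero hq0] at this
        rw [← Polynomial.natDegree_lt_iff_degree_lt hq0]
        omega
  rw [← hmap, ← (Submodule.equivMapOfInjective μ hμinj _).finrank_eq,
    (Polynomial.degreeLTEquiv K (n - d)).finrank_eq]
  simp [Module.finrank_fin_fun]


lemma cyclicCode_finrank {F : Type*} [Field F] [CharP F 2] {n : ℕ} (hn0 : 0 < n)
    (hodd : ¬ 2 ∣ n) (α : F) (hα : orderOf α = n)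
    (Zf : Finset ℕ) (hZsub : ∀ z ∈ Zf, z < n) (hZcl : ∀ z ∈ Zf, (2 * z) % n ∈ Zf) :
    Module.finrank (ZMod 2)
      (cyclicCode (ZMod.castHom (dvd_refl 2) F) n α ↑Zf) = n - Zf.card := by
  classical
  set K := ZMod 2
  set φ : K →+* F := ZMod.castHom (dvd_refl 2) F with hφ
  have hφinj : Function.Injective φ := φ.injective
  have hαne : α ≠ 0 := by
    rintro rfl
    have : (0 : F) ^ n = 1 := hα ▸ pow_orderOf_eq_one (0 : F)
    rw [zero_pow hn0.ne'] at this
    exact zero_ne_one this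
  have hαinj : ∀ a < n, ∀ b < n, α ^ a = α ^ b → a = b := by
    have key : ∀ a b, a ≤ b → b < n → α ^ a = α ^ b → a = b := by
      intro a b hab hbn h
      have h1 : α ^ a * α ^ (b - a) = α ^ a * 1 := by
        rw [mul_one, ← pow_add]
        rw [h]; congr 1; omega
      have h2 : α ^ (b - a) = 1 := mul_left_cancel₀ (pow_ne_zero _ hαne) h1
      have := orderOf_dvd_of_pow_eq_one h2
      rw [hα] at this
      have : b - a = 0 := Nat.eq_zero_of_dvd_of_lt this (by omega) |>.symm ▸ rfl
      omega
    intro a ha b hb h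
    rcases le_total a b with hab | hab
    · exact key a b hab hb h
    · exact (key b a hab ha h.symm).symm
  -- the generator polynomial over F
  set g : F[X] := ∏ z ∈ Zf, (X - C (α ^ z)) with hg
  have hgmonic : g.Monic := monic_prod_of_monic _ _ fun z _ => monic_X_sub_C _
  have hgdeg : g.natDegree = Zf.card := by
    rw [hg, natDegree_prod _ _ fun z _ => X_sub_C_ne_zero _,
      Finset.sum_congr rfl fun z _ => natDegree_X_sub_C (α ^ z)]
    simp
  -- Frobenius invariance
  have hfrob : g.map (frobenius F 2) = g := by
    rw [hg, Polynomial.map_prod]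
    have step : ∀ z ∈ Zf, (X - C (α ^ z)).map (frobenius F 2)
        = X - C (α ^ (2 * z % n)) := by
      intro z hz
      rw [Polynomial.map_sub, map_X, map_C, frobenius_def]
      congr 2
      rw [← pow_mul, mul_comm z 2, ← hα, pow_mod_orderOf]
    rw [Finset.prod_congr rfl step]
    -- reindex by the bijection z ↦ 2z % n on Zf
    have hinj : Set.InjOn (fun z => 2 * z % n) ↑Zf := by
      intro a ha b hb h
      simp only at h
      have ha' := hZsub a ha
      have hb' := hZsub b hb
      have : (2 * a) % n = (2 * b) % n := h
      have hmod : a % n = b % n := by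
        have hco : Nat.Coprime 2 n := (Nat.Prime.coprime_iff_not_dvd Nat.prime_two).mpr hodd
        exact Nat.ModEq.cancel_left_of_coprime (Nat.coprime_comm.mp hco) this
      rwa [Nat.mod_eq_of_lt ha', Nat.mod_eq_of_lt hb'] at hmod
    have himg : Finset.image (fun z => 2 * z % n) Zf = Zf := by
      apply Finset.eq_of_subset_of_card_le
      · intro x hx
        obtain ⟨z, hz, rfl⟩ := Finset.mem_image.mp hx
        exact hZcl z hz
      · rw [Finset.card_image_of_injOn hinj]
    conv_rhs => rw [← himg]
    rw [Finset.prod_image (fun a ha b hb => hinj ha hb)]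
  -- g lifts to (ZMod 2)[X]
  have hcoeff : ∀ k, g.coeff k ∈ Set.range φ := by
    intro k
    have h2 : (g.coeff k) ^ 2 = g.coeff k := by
      have := congrArg (fun q => Polynomial.coeff q k) hfrob
      simpa [Polynomial.coeff_map, frobenius_def] using this
    have : g.coeff k * (g.coeff k - 1) = 0 := by ring_nf; linear_combination h2
    rcases mul_eq_zero.mp this with h | h
    · exact ⟨0, by simp [h.symm]⟩
    · exact ⟨1, by rw [map_one]; rw [sub_eq_zero] at h; exact h.symm⟩
  obtain ⟨g₀, hg₀⟩ := (Polynomial.mem_lifts _).mp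
    ((Polynomial.lifts_iff_coeff_lifts _).mpr hcoeff)
  have hg₀monic : g₀.Monic := monic_of_injective hφinj (hg₀.symm ▸ hgmonic)
  have hg₀deg : g₀.natDegree = Zf.card := by
    rw [← hgdeg, ← hg₀, natDegree_map_eq_of_injective hφinj]
  -- key equivalence
  have hkey : ∀ p : K[X], (∀ z ∈ Zf, eval (α ^ z) (p.map φ) = 0) ↔ g₀ ∣ p := by
    intro p
    rw [← Polynomial.map_dvd_map' φ, hg₀]
    constructor
    · intro h
      rcases eq_or_ne (p.map φ) 0 with h0 | h0
      · exact h0 ▸ dvd_zero _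
      · have hs : (Zf.val.map fun z => α ^ z) ≤ (p.map φ).roots := by
          rw [Multiset.le_iff_subset]
          · intro x hx
            obtain ⟨z, hz, rfl⟩ := Multiset.mem_map.mp hx
            exact (Polynomial.mem_roots h0).mpr (h z hz)
          · exact Multiset.Nodup.map_on
              (fun a ha b hb => hαinj a (hZsub a ha) b (hZsub b hb)) Zf.nodup
        have hprod := (Multiset.prod_X_sub_C_dvd_iff_le_roots h0 _).mpr hs
        rw [Multiset.map_map] at hprod
        have heq : (Zf.val.map ((fun a => X - C a) ∘ fun z => α ^ z)).prod = g := by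
          rw [hg, Finset.prod_eq_multiset_prod]
          rfl
        rwa [heq] at hprod
    · intro h z hz
      refine Polynomial.eval_eq_zero_of_dvd_of_eval_eq_zero
        (dvd_trans (Finset.dvd_prod_of_mem _ hz) h) ?_
      simp
  -- connect the code to the polynomial module
  have hcardle : Zf.card ≤ n := by
    have : Zf ⊆ Finset.range n := fun z hz => Finset.mem_range.mpr (hZsub z hz)
    simpa using Finset.card_le_card this
  set E : (Fin n → K) →ₗ[K] K[X] :=
    (degreeLT K n).subtype ∘ₗ ((degreeLTEquiv K n).symm : (Fin n → K) ≃ₗ[K] degreeLT K n).toLinearMap with hE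
  have hEinj : Function.Injective E := by
    apply Function.Injective.comp (Submodule.injective_subtype _)
    exact ((degreeLTEquiv K n).symm : (Fin n → K) ≃ₗ[K] degreeLT K n).injective
  have hEmem : ∀ c : Fin n → K, E c ∈ degreeLT K n := fun c =>
    ((degreeLTEquiv K n).symm c).2
  have hEcoeff : ∀ (c : Fin n → K) (i : Fin n), (E c).coeff i = c i := by
    intro c i
    have := congrFun ((degreeLTEquiv K n).apply_symm_apply c) i
    exact this
  have hEval : ∀ (c : Fin n → K) (z : ℕ),
      eval (α ^ z) ((E c).map φ) = ∑ i : Fin n, φ (c i) * α ^ ((i : ℕ) * z) := by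
    intro c z
    have hm : (E c).map φ ∈ degreeLT F n := by
      rw [Polynomial.mem_degreeLT]
      exact lt_of_le_of_lt (Polynomial.degree_map_le)
        (Polynomial.mem_degreeLT.mp (hEmem c))
    rw [eval_eq_sum_degreeLTEquiv hm (α ^ z)]
    refine Finset.sum_congr rfl fun i _ => ?_
    have h1 : degreeLTEquiv F n ⟨(E c).map φ, hm⟩ i = ((E c).map φ).coeff i := rfl
    rw [h1, Polynomial.coeff_map, hEcoeff c i, ← pow_mul, mul_comm z (i : ℕ)]
  have hmemV : ∀ c : Fin n → K,
      c ∈ cyclicCode φ n α ↑Zf ↔ g₀ ∣ E c := by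
    intro c
    have h1 : c ∈ cyclicCode φ n α ↑Zf ↔
        ∀ z ∈ Zf, ∑ i : Fin n, φ (c i) * α ^ ((i : ℕ) * z) = 0 := Iff.rfl
    rw [h1, ← hkey (E c)]
    constructor
    · intro h z hz
      rw [hEval c z]
      exact h z hz
    · intro h z hz
      rw [← hEval c z]
      exact h z hz
  have hmapE : (cyclicCode φ n α ↑Zf).map E =
      degreeLT K n ⊓ (Ideal.span {g₀}).restrictScalars K := by
    apply le_antisymm
    · rintro p ⟨c, hc, rfl⟩
      refine Submodule.mem_inf.mpr ⟨hEmem c, ?_⟩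
      exact (Submodule.restrictScalars_mem ..).mpr
        (Ideal.mem_span_singleton.mpr ((hmemV c).mp hc))
    · rintro p hp
      obtain ⟨hp1, hp2⟩ := Submodule.mem_inf.mp hp
      set c := degreeLTEquiv K n ⟨p, hp1⟩ with hc
      have hEc : E c = p := by
        show ((degreeLTEquiv K n).symm (degreeLTEquiv K n ⟨p, hp1⟩) : K[X]) = p
        rw [(degreeLTEquiv K n).symm_apply_apply]
      refine ⟨c, ?_, hEc⟩
      exact (hmemV c).mpr (hEc ▸ Ideal.mem_span_singleton.mp
        ((Submodule.restrictScalars_mem ..).mp hp2))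
  have hfr := (Submodule.equivMapOfInjective E hEinj (cyclicCode φ n α ↑Zf)).finrank_eq
  rw [hmapE] at hfr
  rw [show Module.finrank (ZMod 2) ↥(cyclicCode φ n α ↑Zf) =
      Module.finrank K ↥(cyclicCode φ n α ↑Zf) from rfl, hfr,
    finrank_degLT_inf_span g₀ hg₀monic n (hg₀deg ▸ hcardle), hg₀deg]



section Comb
variable (m n : ℕ)

lemma pow_mod_n (hm : 3 ≤ m) (hn : n = 2 ^ m - 1) (j : ℕ) : 2 ^ j % n = 2 ^ (j % m) := by
  have hm0 : 0 < m := by omega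
  have h2m : 2 ^ m = n + 1 := by
    have : 1 ≤ 2 ^ m := Nat.one_le_two_pow
    omega
  have hn7 : 7 ≤ n := by
    have : 2 ^ 3 ≤ 2 ^ m := Nat.pow_le_pow_right (by norm_num) hm
    omega
  have hmod : 2 ^ j ≡ 2 ^ (j % m) [MOD n] := by
    conv_lhs => rw [← Nat.div_add_mod j m]
    rw [pow_add, pow_mul]
    calc (2 ^ m) ^ (j / m) * 2 ^ (j % m)
        ≡ 1 ^ (j / m) * 2 ^ (j % m) [MOD n] := by
          exact Nat.ModEq.mul_right _ (Nat.ModEq.pow _ (by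
            show 2 ^ m % n = 1 % n
            rw [h2m, Nat.add_mod_left]))
      _ = 2 ^ (j % m) := by rw [one_pow, one_mul]
  have hlt : 2 ^ (j % m) < n := by
    have h1 : j % m < m := Nat.mod_lt _ hm0
    have h2 : 2 ^ (j % m) ≤ 2 ^ (m - 1) := Nat.pow_le_pow_right (by norm_num) (by omega)
    have h3 : 2 * 2 ^ (m - 1) = 2 ^ m := by
      rw [← pow_succ']
      congr 1
      omega
    omega
  rw [Nat.ModEq] at hmod
  rw [hmod, Nat.mod_eq_of_lt hlt]

lemma negpow_mod_n (hm : 3 ≤ m) (hn : n = 2 ^ m - 1) (j : ℕ) :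
    (n - 1) * 2 ^ j % n = n - 2 ^ (j % m) := by
  have hm0 : 0 < m := by omega
  have hn7 : 7 ≤ n := by
    have : 2 ^ 3 ≤ 2 ^ m := Nat.pow_le_pow_right (by norm_num) hm
    omega
  have hlt : 2 ^ (j % m) < n := by
    have h1 : j % m < m := Nat.mod_lt _ hm0
    have h2 : 2 ^ (j % m) ≤ 2 ^ (m - 1) := Nat.pow_le_pow_right (by norm_num) (by omega)
    have h3 : 2 * 2 ^ (m - 1) = 2 ^ m := by
      rw [← pow_succ']; congr 1; omega
    omega
  have hmod : (n - 1) * 2 ^ j ≡ (n - 1) * 2 ^ (j % m) [MOD n] := by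
    apply Nat.ModEq.mul_left
    have := pow_mod_n m n hm hn j
    show 2 ^ j % n = 2 ^ (j % m) % n
    rw [this, Nat.mod_eq_of_lt hlt]
  have h1 : 1 ≤ 2 ^ (j % m) := Nat.one_le_two_pow
  rw [Nat.ModEq] at hmod
  rw [hmod]
  obtain ⟨a, ha, h1a, hlta⟩ : ∃ a, 2 ^ (j % m) = a ∧ 1 ≤ a ∧ a < n := ⟨_, rfl, h1, hlt⟩
  rw [ha]
  have key : (n - 1) * a = n * (a - 1) + (n - a) := by
    have e1 : (n - 1) * a = n * a - a := by rw [Nat.sub_mul, one_mul]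
    have e2 : n * (a - 1) = n * a - n := by rw [Nat.mul_sub, mul_one]
    have e3 : a ≤ n * a := Nat.le_mul_of_pos_left a (by omega)
    have e4 : n ≤ n * a := Nat.le_mul_of_pos_right n (by omega)
    omega
  rw [key, Nat.mul_add_mod, Nat.mod_eq_of_lt (by omega)]

end Comb


end Aux

/-- Construction 2: the binary cyclic code of length `n = 2^m − 1` with defining set of
exponents `{j(r+1) : j = 0, …, n/(r+1) − 1} ∪ [1] ∪ [n−1]` has dimension
`r(2^m − 1)/(r+1) − 2m` over `F_2`. -/
theorem stmt8 (m : ℕ) (hm : 3 ≤ m) (n : ℕ) (hn : n = 2 ^ m - 1)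
    (F : Type*) [Field F] [Fintype F] [CharP F 2] (hcard : Fintype.card F = 2 ^ m)
    (α : F) (hα : orderOf α = n)
    (r : ℕ) (hr : 0 < r) (hrn : r + 1 ∣ n) :
    (Module.finrank (ZMod 2)
      (cyclicCode (ZMod.castHom (dvd_refl 2) F) n α
        ({z | ∃ j < n / (r + 1), z = j * (r + 1)} ∪ cycCoset 2 n 1 ∪ cycCoset 2 n (n - 1)))
      : ℤ) = (r : ℤ) * (2 ^ m - 1) / (r + 1) - 2 * m := by
  classical
  have hm0 : 0 < m := by omega
  have h2m : 2 ^ m = n + 1 := by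
    have : 1 ≤ 2 ^ m := Nat.one_le_two_pow
    omega
  have hn7 : 7 ≤ n := by
    have : 2 ^ 3 ≤ 2 ^ m := Nat.pow_le_pow_right (by norm_num) hm
    omega
  have hn0 : 0 < n := by omega
  have hodd : ¬ 2 ∣ n := by
    have : 2 ∣ 2 ^ m := dvd_pow_self 2 (by omega)
    omega
  have hro : ¬ 2 ∣ (r + 1) := fun h => hodd (h.trans hrn)
  set t := n / (r + 1) with htdef
  have hnt : n = (r + 1) * t := (Nat.mul_div_cancel' hrn).symm
  have ht0 : 0 < t := by
    rcases Nat.eq_zero_or_pos t with h | h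
    · rw [h, mul_zero] at hnt; omega
    · exact h
  have hpowlt : ∀ j < m, 2 ^ j < n := by
    intro j hj
    have h2 : 2 ^ j ≤ 2 ^ (m - 1) := Nat.pow_le_pow_right (by norm_num) (by omega)
    have h3 : 2 * 2 ^ (m - 1) = 2 ^ m := by
      rw [← pow_succ']; congr 1; omega
    have h4 : 4 ≤ 2 ^ (m - 1) := by
      calc (4 : ℕ) = 2 ^ 2 := by norm_num
        _ ≤ 2 ^ (m - 1) := Nat.pow_le_pow_right (by norm_num) (by omega)
    omega
  set A : Finset ℕ := (Finset.range t).image (fun j => j * (r + 1)) with hA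
  set B : Finset ℕ := (Finset.range m).image (fun j => 2 ^ j) with hB
  set B' : Finset ℕ := (Finset.range m).image (fun j => n - 2 ^ j) with hB'
  set Zf : Finset ℕ := A ∪ B ∪ B' with hZf
  -- the defining set equals ↑Zf
  have hZeq : ({z | ∃ j < n / (r + 1), z = j * (r + 1)} ∪ cycCoset 2 n 1
      ∪ cycCoset 2 n (n - 1)) = (↑Zf : Set ℕ) := by
    have c1 : {z | ∃ j < n / (r + 1), z = j * (r + 1)} = (↑A : Set ℕ) := by
      ext z
      simp only [hA, Set.mem_setOf_eq, Finset.coe_image, Set.mem_image, Finset.mem_coe,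
        Finset.mem_range, ← htdef]
      constructor
      · rintro ⟨j, hj, rfl⟩; exact ⟨j, hj, rfl⟩
      · rintro ⟨j, hj, rfl⟩; exact ⟨j, hj, rfl⟩
    have c2 : cycCoset 2 n 1 = (↑B : Set ℕ) := by
      ext b
      simp only [cycCoset, Set.mem_setOf_eq, hB, Finset.coe_image, Set.mem_image,
        Finset.mem_coe, Finset.mem_range, one_mul]
      constructor
      · rintro ⟨j, rfl⟩
        exact ⟨j % m, Nat.mod_lt _ hm0, (pow_mod_n m n hm hn j).symm⟩
      · rintro ⟨j, hj, rfl⟩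
        refine ⟨j, ?_⟩
        rw [pow_mod_n m n hm hn j, Nat.mod_eq_of_lt hj]
    have c3 : cycCoset 2 n (n - 1) = (↑B' : Set ℕ) := by
      ext b
      simp only [cycCoset, Set.mem_setOf_eq, hB', Finset.coe_image, Set.mem_image,
        Finset.mem_coe, Finset.mem_range]
      constructor
      · rintro ⟨j, rfl⟩
        exact ⟨j % m, Nat.mod_lt _ hm0, (negpow_mod_n m n hm hn j).symm⟩
      · rintro ⟨j, hj, rfl⟩
        refine ⟨j, ?_⟩
        rw [negpow_mod_n m n hm hn j, Nat.mod_eq_of_lt hj]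
    rw [c1, c2, c3, hZf]
    push_cast
    rfl
  -- elements are < n
  have hZsub : ∀ z ∈ Zf, z < n := by
    intro z hz
    rw [hZf, Finset.mem_union, Finset.mem_union] at hz
    rcases hz with (hz | hz) | hz
    · obtain ⟨j, hj, rfl⟩ := Finset.mem_image.mp hz
      rw [Finset.mem_range] at hj
      calc j * (r + 1) < t * (r + 1) := by
            exact Nat.mul_lt_mul_of_lt_of_le hj (le_refl _) (by omega)
        _ = n := by rw [mul_comm]; omega
    · obtain ⟨j, hj, rfl⟩ := Finset.mem_image.mp hz
      exact hpowlt j (Finset.mem_range.mp hj)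
    · obtain ⟨j, hj, rfl⟩ := Finset.mem_image.mp hz
      have : 1 ≤ 2 ^ j := Nat.one_le_two_pow
      omega
  -- closure under doubling mod n
  have hZcl : ∀ z ∈ Zf, (2 * z) % n ∈ Zf := by
    intro z hz
    rw [hZf, Finset.mem_union, Finset.mem_union] at hz ⊢
    rcases hz with (hz | hz) | hz
    · obtain ⟨j, hj, rfl⟩ := Finset.mem_image.mp hz
      rw [Finset.mem_range] at hj
      left; left
      have : 2 * (j * (r + 1)) % n = (2 * j % t) * (r + 1) := by
        conv_lhs => rw [show 2 * (j * (r + 1)) = (2 * j) * (r + 1) by ring,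
          hnt, mul_comm (r + 1) t, Nat.mul_mod_mul_right]
      rw [this]
      exact Finset.mem_image.mpr ⟨2 * j % t, Finset.mem_range.mpr (Nat.mod_lt _ ht0), rfl⟩
    · obtain ⟨j, hj, rfl⟩ := Finset.mem_image.mp hz
      left; right
      have : 2 * 2 ^ j % n = 2 ^ ((j + 1) % m) := by
        rw [← pow_succ', pow_mod_n m n hm hn (j + 1)]
      rw [this]
      exact Finset.mem_image.mpr ⟨(j + 1) % m, Finset.mem_range.mpr (Nat.mod_lt _ hm0), rfl⟩
    · obtain ⟨j, hj, rfl⟩ := Finset.mem_image.mp hz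
      rw [Finset.mem_range] at hj
      right
      have hx : n - 2 ^ j = (n - 1) * 2 ^ j % n := by
        rw [negpow_mod_n m n hm hn j, Nat.mod_eq_of_lt hj]
      have hc : 2 * ((n - 1) * 2 ^ j % n) ≡ (n - 1) * 2 ^ (j + 1) [MOD n] := by
        calc 2 * ((n - 1) * 2 ^ j % n) ≡ 2 * ((n - 1) * 2 ^ j) [MOD n] :=
              Nat.ModEq.mul_left 2 (Nat.mod_modEq _ n)
          _ = (n - 1) * 2 ^ (j + 1) := by ring
      have : 2 * (n - 2 ^ j) % n = n - 2 ^ ((j + 1) % m) := by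
        rw [hx, hc, negpow_mod_n m n hm hn (j + 1)]
      rw [this]
      exact Finset.mem_image.mpr ⟨(j + 1) % m, Finset.mem_range.mpr (Nat.mod_lt _ hm0), rfl⟩
  -- cardinality
  have hcardA : A.card = t := by
    rw [hA, Finset.card_image_of_injOn, Finset.card_range]
    intro a _ b _ h
    exact Nat.eq_of_mul_eq_mul_right (by omega) h
  have hcardB : B.card = m := by
    rw [hB, Finset.card_image_of_injOn, Finset.card_range]
    intro a _ b _ h
    exact Nat.pow_right_injective (le_refl 2) h
  have hcardB' : B'.card = m := by
    rw [hB', Finset.card_image_of_injOn, Finset.card_range]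
    intro a ha b hb h
    have h1 : 2 ^ a < n := hpowlt a (by simpa using ha)
    have h2 : 2 ^ b < n := hpowlt b (by simpa using hb)
    have : 2 ^ a = 2 ^ b := by simp only at h; omega
    exact Nat.pow_right_injective (le_refl 2) this
  have hc2 : Nat.Coprime (r + 1) 2 := by
    rw [Nat.coprime_comm]
    exact (Nat.Prime.coprime_iff_not_dvd Nat.prime_two).mpr hro
  have hdvd_pow_absurd : ∀ i : ℕ, ¬ (r + 1) ∣ 2 ^ i := by
    intro i h
    have := Nat.Coprime.eq_one_of_dvd (hc2.pow_right i) h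
    omega
  have hdAB : Disjoint A B := by
    rw [Finset.disjoint_left]
    rintro x hxA hxB
    obtain ⟨j, _, rfl⟩ := Finset.mem_image.mp hxA
    obtain ⟨i, _, hi⟩ := Finset.mem_image.mp hxB
    exact hdvd_pow_absurd i (hi ▸ dvd_mul_left (r + 1) j)
  have hdAB' : Disjoint A B' := by
    rw [Finset.disjoint_left]
    rintro x hxA hxB
    obtain ⟨j, hj, rfl⟩ := Finset.mem_image.mp hxA
    obtain ⟨i, hi', hi⟩ := Finset.mem_image.mp hxB
    rw [Finset.mem_range] at hi'
    have h1 : 2 ^ i < n := hpowlt i hi'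
    obtain ⟨P, hP⟩ : ∃ P, j * (r + 1) = P := ⟨_, rfl⟩
    rw [hP] at hi
    have h2 : 2 ^ i = n - P := by rw [← hi, Nat.sub_sub_self h1.le]
    have : (r + 1) ∣ 2 ^ i := by
      rw [h2, ← hP]
      exact Nat.dvd_sub hrn (dvd_mul_left (r + 1) j)
    exact hdvd_pow_absurd i this
  have hdBB' : Disjoint B B' := by
    rw [Finset.disjoint_left]
    rintro x hxB hxB'
    obtain ⟨i, hi', rfl⟩ := Finset.mem_image.mp hxB
    obtain ⟨j, hj', hj⟩ := Finset.mem_image.mp hxB'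
    rw [Finset.mem_range] at hi' hj'
    have h1 : 2 ^ i < n := hpowlt i hi'
    have h2 : 2 ^ j < n := hpowlt j hj'
    have hsum : 2 ^ i + 2 ^ j = n := by omega
    rcases Nat.eq_zero_or_pos i with rfl | hi0
    · have h3 : 2 ^ j ≤ 2 ^ (m - 1) := Nat.pow_le_pow_right (by norm_num) (by omega)
      have h4 : 2 * 2 ^ (m - 1) = 2 ^ m := by rw [← pow_succ']; congr 1; omega
      have h5 : 4 ≤ 2 ^ (m - 1) := by
        calc (4 : ℕ) = 2 ^ 2 := by norm_num
          _ ≤ 2 ^ (m - 1) := Nat.pow_le_pow_right (by norm_num) (by omega)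
      simp only [pow_zero] at hsum
      omega
    · rcases Nat.eq_zero_or_pos j with rfl | hj0
      · have h3 : 2 ^ i ≤ 2 ^ (m - 1) := Nat.pow_le_pow_right (by norm_num) (by omega)
        have h4 : 2 * 2 ^ (m - 1) = 2 ^ m := by rw [← pow_succ']; congr 1; omega
        have h5 : 4 ≤ 2 ^ (m - 1) := by
          calc (4 : ℕ) = 2 ^ 2 := by norm_num
            _ ≤ 2 ^ (m - 1) := Nat.pow_le_pow_right (by norm_num) (by omega)
        simp only [pow_zero] at hsum
        omega
      · have d1 : 2 ∣ 2 ^ i := dvd_pow_self 2 (by omega)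
        have d2 : 2 ∣ 2 ^ j := dvd_pow_self 2 (by omega)
        omega
  have hcardZf : Zf.card = t + 2 * m := by
    rw [hZf, Finset.card_union_of_disjoint, Finset.card_union_of_disjoint hdAB,
      hcardA, hcardB, hcardB']
    · ring
    · exact Finset.disjoint_union_left.mpr ⟨hdAB', hdBB'⟩
  have hcardle : t + 2 * m ≤ n := by
    have hsub : Zf ⊆ Finset.range n := fun z hz => Finset.mem_range.mpr (hZsub z hz)
    have := Finset.card_le_card hsub
    rw [hcardZf, Finset.card_range] at this
    exact this
  -- apply the main dimension theorem
  rw [hZeq, cyclicCode_finrank hn0 hodd α hα Zf hZsub hZcl, hcardZf]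
  -- final integer arithmetic
  have h2mz : ((2 : ℤ)) ^ m = ((2 ^ m : ℕ) : ℤ) := by push_cast; ring
  have hnz : (n : ℤ) = 2 ^ m - 1 := by rw [h2mz]; omega
  have hntz : (n : ℤ) = ((r : ℤ) + 1) * t := by exact_mod_cast congrArg (Nat.cast (R := ℤ)) hnt
  have hdiv : (r : ℤ) * (2 ^ m - 1) / ((r : ℤ) + 1) = (r : ℤ) * t := by
    rw [← hnz, hntz, show (r : ℤ) * (((r : ℤ) + 1) * t) = ((r : ℤ) + 1) * ((r : ℤ) * t) by ring]
    exact Int.mul_ediv_cancel_left _ (by exact_mod_cast (by omega : (r : ℤ) + 1 ≠ 0))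
  have hcast : ((n - (t + 2 * m) : ℕ) : ℤ) = (n : ℤ) - (t : ℤ) - 2 * (m : ℤ) := by
    rw [Nat.cast_sub hcardle]; push_cast; ring
  rw [hcast]
  push_cast
  rw [hdiv]
  linear_combination hntz
end

section
/- Let m ≥ 3, n = 2^m − 1, and let r > 2 be an integer with (r+1) | n. Let C be the binary cyclic code of length n with defining set of exponents Z = {j(r+1) : j = 0, 1, …, n/(r+1) − 1} ∪ [1] ∪ [n−1] ∪ [3] ∪ [n−3], where [a] denotes the 2-cyclotomic coset of a modulo n. Then every nonzero codeword of C has Hamming weight at least 10, and the dimension of C as an F_2-vector space is at least r(2^m − 1)/(r+1) − 4m. -/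
section Aux

variable {F : Type*} [Field F]

lemma aux_powmod {n : ℕ} {α : F} (hα1 : α ^ n = 1) (i a : ℕ) :
    α ^ (i * (a % n)) = α ^ (i * a) := by
  conv_rhs => rw [← Nat.div_add_mod a n]
  have h : i * (n * (a / n) + a % n) = i * (a % n) + n * (i * (a / n)) := by ring
  rw [h, pow_add, pow_mul α n (i * (a / n)), hα1, one_pow, mul_one]

lemma aux_frob [CharP F 2] {n : ℕ} (φ : ZMod 2 →+* F) (α : F) (c : Fin n → ZMod 2) (a : ℕ) :
    ∑ i : Fin n, φ (c i) * α ^ ((i : ℕ) * (2 * a))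
      = (∑ i : Fin n, φ (c i) * α ^ ((i : ℕ) * a)) ^ 2 := by
  rw [CharTwo.sum_sq]
  refine Finset.sum_congr rfl fun i _ => ?_
  have h2 : ∀ x : ZMod 2, x ^ 2 = x := by decide
  rw [mul_pow, ← map_pow, h2, ← pow_mul]
  congr 1
  ring

lemma aux_coset_zero [CharP F 2] {n : ℕ} (φ : ZMod 2 →+* F) {α : F} (hα1 : α ^ n = 1)
    (c : Fin n → ZMod 2) (a : ℕ)
    (h0 : ∑ i : Fin n, φ (c i) * α ^ ((i : ℕ) * a) = 0) (j : ℕ) :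
    ∑ i : Fin n, φ (c i) * α ^ ((i : ℕ) * (a * 2 ^ j % n)) = 0 := by
  have key : ∀ j : ℕ, ∑ i : Fin n, φ (c i) * α ^ ((i : ℕ) * (a * 2 ^ j)) = 0 := by
    intro j
    induction j with
    | zero => simpa using h0
    | succ k ih =>
      have h : (∑ i : Fin n, φ (c i) * α ^ ((i : ℕ) * (a * 2 ^ (k + 1))))
          = ∑ i : Fin n, φ (c i) * α ^ ((i : ℕ) * (2 * (a * 2 ^ k))) := by
        refine Finset.sum_congr rfl fun i _ => ?_
        congr 2
        ring
      rw [h, aux_frob, ih]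
      ring
  calc ∑ i : Fin n, φ (c i) * α ^ ((i : ℕ) * (a * 2 ^ j % n))
      = ∑ i : Fin n, φ (c i) * α ^ ((i : ℕ) * (a * 2 ^ j)) :=
        Finset.sum_congr rfl fun i _ => by rw [aux_powmod hα1]
    _ = 0 := key j

end Aux

lemma aux_dist {F : Type*} [Field F] {n : ℕ} (hn7 : 7 ≤ n) (φ : ZMod 2 →+* F) {α : F}
    (hα : orderOf α = n) (c : Fin n → ZMod 2)
    (h9 : ∀ l < 9, ∑ i : Fin n, φ (c i) * α ^ ((i : ℕ) * ((n - 4 + l) % n)) = 0)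
    (hc : c ≠ 0) : 10 ≤ hammingNorm c := by
  by_contra hlt
  push_neg at hlt
  classical
  have hα1 : α ^ n = 1 := by rw [← hα]; exact pow_orderOf_eq_one α
  have hα0 : α ≠ 0 := by
    intro h
    rw [h, zero_pow (by omega : n ≠ 0)] at hα1
    exact zero_ne_one hα1
  set s : Finset (Fin n) := Finset.univ.filter (fun i => c i ≠ 0) with hs
  have hws : hammingNorm c = s.card := rfl
  have hw9 : s.card ≤ 9 := by omega
  set w := s.card with hwdef
  let e : Fin w ≃ {x // x ∈ s} := s.equivFin.symm
  set v : Fin w → F := fun k => α ^ ((e k : Fin n) : ℕ) with hv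
  set u : Fin w → F := fun k => φ (c (e k)) * α ^ (((e k : Fin n) : ℕ) * (n - 4)) with hu
  have hvinj : Function.Injective v := by
    intro k1 k2 h
    have h1 : ((e k1 : Fin n) : ℕ) ∈ Set.Iio (orderOf α) := by
      rw [hα]; exact (e k1 : Fin n).isLt
    have h2 : ((e k2 : Fin n) : ℕ) ∈ Set.Iio (orderOf α) := by
      rw [hα]; exact (e k2 : Fin n).isLt
    have := pow_injOn_Iio_orderOf h1 h2 h
    exact e.injective (Subtype.ext (Fin.ext this))
  have hmv : ∀ j : Fin w, ∑ k : Fin w, v k ^ (j : ℕ) * u k = 0 := by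
    intro j
    have hj9 : (j : ℕ) < 9 := lt_of_lt_of_le j.isLt hw9
    have h0 := h9 (j : ℕ) hj9
    have hsub : ∑ i : Fin n, φ (c i) * α ^ ((i : ℕ) * ((n - 4 + (j : ℕ)) % n))
        = ∑ i ∈ s, φ (c i) * α ^ ((i : ℕ) * ((n - 4 + (j : ℕ)) % n)) := by
      refine (Finset.sum_subset (Finset.subset_univ s) ?_).symm
      intro i _ hi
      have : c i = 0 := by
        by_contra hci
        exact hi (Finset.mem_filter.mpr ⟨Finset.mem_univ i, hci⟩)
      rw [this, map_zero, zero_mul]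
    have hterm : ∀ i : Fin n,
        φ (c i) * α ^ ((i : ℕ) * ((n - 4 + (j : ℕ)) % n))
          = (α ^ (i : ℕ)) ^ (j : ℕ) * (φ (c i) * α ^ ((i : ℕ) * (n - 4))) := by
      intro i
      rw [aux_powmod hα1]
      have h : (i : ℕ) * (n - 4 + (j : ℕ)) = (i : ℕ) * (j : ℕ) + (i : ℕ) * (n - 4) := by ring
      rw [h, pow_add, pow_mul]
      ring
    have hre : ∑ i ∈ s, φ (c i) * α ^ ((i : ℕ) * ((n - 4 + (j : ℕ)) % n))
        = ∑ k : Fin w, v k ^ (j : ℕ) * u k := by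
      rw [← Finset.sum_coe_sort s]
      rw [← e.sum_comp (fun x : {x // x ∈ s} =>
        φ (c x) * α ^ (((x : Fin n) : ℕ) * ((n - 4 + (j : ℕ)) % n)))]
      refine Finset.sum_congr rfl fun k _ => ?_
      rw [hterm]
    rw [hsub, hre] at h0
    exact h0
  have huz : u = 0 := by
    set M : Matrix (Fin w) (Fin w) F := (Matrix.vandermonde v).transpose with hM
    have hdet : M.det ≠ 0 := by
      rw [hM, Matrix.det_transpose]
      exact Matrix.det_vandermonde_ne_zero_iff.mpr hvinj
    refine Matrix.eq_zero_of_mulVec_eq_zero hdet ?_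
    funext j
    show ∑ k, M j k * u k = 0
    calc ∑ k, M j k * u k
        = ∑ k : Fin w, v k ^ (j : ℕ) * u k := by
          refine Finset.sum_congr rfl fun k _ => ?_
          rfl
      _ = 0 := hmv j
  obtain ⟨i, hi⟩ := Function.ne_iff.mp hc
  have his : i ∈ s := Finset.mem_filter.mpr ⟨Finset.mem_univ i, by simpa using hi⟩
  have hk := congrFun huz (e.symm ⟨i, his⟩)
  simp only [hu, Pi.zero_apply, Equiv.apply_symm_apply] at hk
  have hφ : φ (c i) ≠ 0 := fun h => by
    have := φ.injective (by rw [h, map_zero] : φ (c i) = φ 0)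
    simpa [this] using hi
  exact (mul_ne_zero hφ (pow_ne_zero _ hα0)) hk


lemma mem_cyclicCode_iff {K F : Type*} [Field K] [Field F] (φ : K →+* F) (n : ℕ) (α : F)
    (Z : Set ℕ) (c : Fin n → K) :
    c ∈ cyclicCode φ n α Z ↔ ∀ z ∈ Z, ∑ i : Fin n, φ (c i) * α ^ ((i : ℕ) * z) = 0 :=
  Iff.rfl


/-- For `r > 2`, the binary cyclic code of length `n = 2^m − 1` with defining set of
exponents `{j(r+1) : j = 0, …, n/(r+1) − 1} ∪ [1] ∪ [n−1] ∪ [3] ∪ [n−3]` has minimum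
distance at least `10` and dimension at least `r(2^m − 1)/(r+1) − 4m` over `F_2`. -/
theorem stmt10 (m : ℕ) (hm : 3 ≤ m) (n : ℕ) (hn : n = 2 ^ m - 1)
    (F : Type*) [Field F] [Fintype F] [CharP F 2] (hcard : Fintype.card F = 2 ^ m)
    (α : F) (hα : orderOf α = n)
    (r : ℕ) (hr : 2 < r) (hrn : r + 1 ∣ n) :
    (∀ c ∈ cyclicCode (ZMod.castHom (dvd_refl 2) F) n α
      ({z | ∃ j < n / (r + 1), z = j * (r + 1)} ∪ cycCoset 2 n 1 ∪ cycCoset 2 n (n - 1)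
        ∪ cycCoset 2 n 3 ∪ cycCoset 2 n (n - 3)),
      c ≠ 0 → 10 ≤ hammingNorm c) ∧
    (r : ℤ) * (2 ^ m - 1) / (r + 1) - 4 * m ≤
    (Module.finrank (ZMod 2)
      (cyclicCode (ZMod.castHom (dvd_refl 2) F) n α
        ({z | ∃ j < n / (r + 1), z = j * (r + 1)} ∪ cycCoset 2 n 1 ∪ cycCoset 2 n (n - 1)
          ∪ cycCoset 2 n 3 ∪ cycCoset 2 n (n - 3))) : ℤ) := by
  classical
  set φ := ZMod.castHom (dvd_refl 2) F with hφdef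
  set Z : Set ℕ := {z | ∃ j < n / (r + 1), z = j * (r + 1)} ∪ cycCoset 2 n 1
    ∪ cycCoset 2 n (n - 1) ∪ cycCoset 2 n 3 ∪ cycCoset 2 n (n - 3) with hZdef
  have h8 : 8 ≤ 2 ^ m := by
    calc (8 : ℕ) = 2 ^ 3 := by norm_num
    _ ≤ 2 ^ m := Nat.pow_le_pow_right (by norm_num) hm
  have hn7 : 7 ≤ n := by omega
  have hα1 : α ^ n = 1 := by rw [← hα]; exact pow_orderOf_eq_one α
  set t := n / (r + 1) with htdef
  have htn : (r + 1) * t = n := Nat.mul_div_cancel' hrn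
  have ht1 : 1 ≤ t :=
    Nat.div_pos (Nat.le_of_dvd (by omega) hrn) (by omega)
  -- the nine consecutive exponents belong to Z
  have hZ9 : ∀ l < 9, (n - 4 + l) % n ∈ Z := by
    intro l hl
    interval_cases l
    · -- n-4 ∈ [n-1], j = 2
      refine Or.inl (Or.inl (Or.inr ⟨2, ?_⟩))
      rw [show (n - 1) * 2 ^ 2 = (n - 4 + 0) + 3 * n from by omega,
        Nat.add_mul_mod_self_right]
    · -- n-3 ∈ [n-3], j = 0
      refine Or.inr ⟨0, ?_⟩
      rw [show (n - 3) * 2 ^ 0 = (n - 4 + 1) + 0 * n from by omega,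
        Nat.add_mul_mod_self_right]
    · -- n-2 ∈ [n-1], j = 1
      refine Or.inl (Or.inl (Or.inr ⟨1, ?_⟩))
      rw [show (n - 1) * 2 ^ 1 = (n - 4 + 2) + 1 * n from by omega,
        Nat.add_mul_mod_self_right]
    · -- n-1 ∈ [n-1], j = 0
      refine Or.inl (Or.inl (Or.inr ⟨0, ?_⟩))
      rw [show (n - 1) * 2 ^ 0 = (n - 4 + 3) + 0 * n from by omega,
        Nat.add_mul_mod_self_right]
    · -- 0, multiple of r+1 with j = 0
      refine Or.inl (Or.inl (Or.inl (Or.inl ⟨0, ht1, ?_⟩)))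
      rw [show n - 4 + 4 = 0 + 1 * n from by omega, Nat.add_mul_mod_self_right]
      simp
    · -- 1 ∈ [1], j = 0
      refine Or.inl (Or.inl (Or.inl (Or.inr ⟨0, ?_⟩)))
      rw [show n - 4 + 5 = 1 + 1 * n from by omega,
        show 1 * 2 ^ 0 = 1 + 0 * n from by norm_num,
        Nat.add_mul_mod_self_right, Nat.add_mul_mod_self_right]
    · -- 2 ∈ [1], j = 1
      refine Or.inl (Or.inl (Or.inl (Or.inr ⟨1, ?_⟩)))
      rw [show n - 4 + 6 = 2 + 1 * n from by omega,
        show 1 * 2 ^ 1 = 2 + 0 * n from by norm_num,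
        Nat.add_mul_mod_self_right, Nat.add_mul_mod_self_right]
    · -- 3 ∈ [3], j = 0
      refine Or.inl (Or.inr ⟨0, ?_⟩)
      rw [show n - 4 + 7 = 3 + 1 * n from by omega,
        show 3 * 2 ^ 0 = 3 + 0 * n from by norm_num,
        Nat.add_mul_mod_self_right, Nat.add_mul_mod_self_right]
    · -- 4 ∈ [1], j = 2
      refine Or.inl (Or.inl (Or.inl (Or.inr ⟨2, ?_⟩)))
      rw [show n - 4 + 8 = 4 + 1 * n from by omega,
        show 1 * 2 ^ 2 = 4 + 0 * n from by norm_num,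
        Nat.add_mul_mod_self_right, Nat.add_mul_mod_self_right]
  constructor
  · -- minimum distance
    intro c hc hcne
    refine aux_dist hn7 φ hα c ?_ hcne
    intro l hl
    exact (mem_cyclicCode_iff φ n α Z c).mp hc _ (hZ9 l hl)
  · -- dimension
    letI : Algebra (ZMod 2) F := ZMod.algebra F 2
    have hsmul : ∀ (x : ZMod 2) (y : F), x • y = φ x * y := fun x y => by
      rw [Algebra.smul_def]; rfl
    -- the evaluation linear maps
    let ev : ℕ → ((Fin n → ZMod 2) →ₗ[ZMod 2] F) := fun a =>
      { toFun := fun c => ∑ i : Fin n, φ (c i) * α ^ ((i : ℕ) * a)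
        map_add' := by
          intro x y
          rw [← Finset.sum_add_distrib]
          exact Finset.sum_congr rfl fun i _ => by rw [Pi.add_apply, map_add, add_mul]
        map_smul' := by
          intro k x
          simp only [RingHom.id_apply]
          rw [hsmul, Finset.mul_sum]
          refine Finset.sum_congr rfl fun i _ => ?_
          rw [Pi.smul_apply, smul_eq_mul, map_mul, mul_assoc] }
    have hev : ∀ (a : ℕ) (c : Fin n → ZMod 2),
        ev a c = ∑ i : Fin n, φ (c i) * α ^ ((i : ℕ) * a) := fun _ _ => rfl
    let gq : Fin n → Fin t := fun i => ⟨(i : ℕ) % t, Nat.mod_lt _ (by omega)⟩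
    let fold : (Fin n → ZMod 2) →ₗ[ZMod 2] (Fin t → ZMod 2) :=
      { toFun := fun c s => ∑ i ∈ Finset.univ.filter (fun i => gq i = s), c i
        map_add' := by
          intro x y
          funext s
          simp [Finset.sum_add_distrib]
        map_smul' := by
          intro k x
          funext s
          simp [Finset.mul_sum] }
    let Φ := fold.prod ((ev 1).prod ((ev (n - 1)).prod ((ev 3).prod (ev (n - 3)))))
    have hsub : LinearMap.ker Φ ≤ cyclicCode φ n α Z := by
      intro c hc
      rw [LinearMap.mem_ker] at hc
      have hfold : fold c = 0 := congrArg Prod.fst hc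
      have h1 : ev 1 c = 0 := congrArg (fun p => p.2.1) hc
      have h2 : ev (n - 1) c = 0 := congrArg (fun p => p.2.2.1) hc
      have h3 : ev 3 c = 0 := congrArg (fun p => p.2.2.2.1) hc
      have h4 : ev (n - 3) c = 0 := congrArg (fun p => p.2.2.2.2) hc
      rw [mem_cyclicCode_iff]
      intro z hz
      rcases hz with ((((⟨j, hj, rfl⟩ | ⟨j, rfl⟩) | ⟨j, rfl⟩) | ⟨j, rfl⟩) | ⟨j, rfl⟩)
      · -- multiples of r+1
        have hβ1 : (α ^ (r + 1)) ^ t = 1 := by rw [← pow_mul, htn, hα1]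
        calc ∑ i : Fin n, φ (c i) * α ^ ((i : ℕ) * (j * (r + 1)))
            = ∑ i : Fin n, φ (c i) * (α ^ (r + 1)) ^ (j * ((i : ℕ) % t)) := by
              refine Finset.sum_congr rfl fun i _ => ?_
              have e1 : α ^ ((i : ℕ) * (j * (r + 1))) = (α ^ (r + 1)) ^ (j * (i : ℕ)) := by
                rw [← pow_mul]
                congr 1
                ring
              rw [e1, ← aux_powmod hβ1 j (i : ℕ)]
          _ = ∑ s : Fin t, ∑ i ∈ Finset.univ.filter (fun i => gq i = s),
                φ (c i) * (α ^ (r + 1)) ^ (j * ((i : ℕ) % t)) :=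
              (Finset.sum_fiberwise Finset.univ gq _).symm
          _ = ∑ s : Fin t, φ (fold c s) * (α ^ (r + 1)) ^ (j * (s : ℕ)) := by
              refine Finset.sum_congr rfl fun s _ => ?_
              have : ∀ i ∈ Finset.univ.filter (fun i => gq i = s),
                  φ (c i) * (α ^ (r + 1)) ^ (j * ((i : ℕ) % t))
                    = φ (c i) * (α ^ (r + 1)) ^ (j * (s : ℕ)) := by
                intro i hi
                have hgi : gq i = s := (Finset.mem_filter.mp hi).2
                have : (i : ℕ) % t = (s : ℕ) := congrArg Fin.val hgi
                rw [this]
              rw [Finset.sum_congr rfl this, ← Finset.sum_mul, ← map_sum]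
              rfl
          _ = 0 := by
              refine Finset.sum_eq_zero fun s _ => ?_
              have : fold c s = 0 := congrFun hfold s
              rw [this, map_zero, zero_mul]
      · exact aux_coset_zero φ hα1 c 1 (by rw [← hev]; exact h1) j
      · exact aux_coset_zero φ hα1 c (n - 1) (by rw [← hev]; exact h2) j
      · exact aux_coset_zero φ hα1 c 3 (by rw [← hev]; exact h3) j
      · exact aux_coset_zero φ hα1 c (n - 3) (by rw [← hev]; exact h4) j
    -- finrank bounds
    haveI : Module.Finite (ZMod 2) F := Module.Finite.of_finite
    have hFm : Module.finrank (ZMod 2) F = m := by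
      have h := Module.card_eq_pow_finrank (K := ZMod 2) (V := F)
      rw [ZMod.card, hcard] at h
      exact (Nat.pow_right_injective (le_refl 2) h.symm)
    have hrange : Module.finrank (ZMod 2)
        (LinearMap.range Φ) ≤ t + 4 * m := by
      have h := Submodule.finrank_le (LinearMap.range Φ)
      have hcod : Module.finrank (ZMod 2)
          ((Fin t → ZMod 2) × F × F × F × F) = t + 4 * m := by
        simp [Module.finrank_prod, Module.finrank_fin_fun, hFm]
        ring
      omega
    have hrn2 := LinearMap.finrank_range_add_finrank_ker Φ
    rw [Module.finrank_fin_fun] at hrn2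
    have hkerge : (n : ℤ) - (t + 4 * m) ≤
        (Module.finrank (ZMod 2) (LinearMap.ker Φ) : ℤ) := by
      have : Module.finrank (ZMod 2) (LinearMap.range Φ) ≤ t + 4 * m := hrange
      omega
    have hmono : Module.finrank (ZMod 2) (LinearMap.ker Φ)
        ≤ Module.finrank (ZMod 2) (cyclicCode φ n α Z) :=
      Submodule.finrank_mono hsub
    have hcast : (n : ℤ) = ((r : ℤ) + 1) * t := by exact_mod_cast htn.symm
    have hpow : ((2 : ℤ) ^ m - 1) = (n : ℤ) := by
      have h1 : (1 : ℕ) ≤ 2 ^ m := Nat.one_le_two_pow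
      rw [hn]
      push_cast [h1]
      ring
    have hdiv : (r : ℤ) * (2 ^ m - 1) / (r + 1) = r * t := by
      rw [hpow, hcast, show (r : ℤ) * (((r : ℤ) + 1) * t) = ((r : ℤ) + 1) * ((r : ℤ) * t)
        from by ring]
      exact Int.mul_ediv_cancel_left _ (by positivity)
    rw [hdiv]
    have hrt : (r : ℤ) * t = (n : ℤ) - t := by rw [hcast]; ring
    have := hmono
    omega
end

section
/- Under the stated hypotheses, the cyclic code C of length n over F with defining set of exponents Z = L ∪ D has dimension exactly k as an F-vector space. -/
lemma dim_cyclic (F : Type*) [Field F] (n : ℕ) (α : F)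
    (hα : orderOf α = n) (Zf : Finset ℕ) (hZ : ∀ x ∈ Zf, x < n) :
    Module.finrank F (cyclicCode (RingHom.id F) n α ↑Zf) = n - Zf.card := by
  classical
  have hvinj : Function.Injective (fun z : Fin n => α ^ (z : ℕ)) := by
    intro a b hab
    exact Fin.ext (pow_injOn_Iio_orderOf (by simp [hα]) (by simp [hα]) hab)
  have hdet : IsUnit (Matrix.vandermonde (fun z : Fin n => α ^ (z : ℕ))) := by
    rw [Matrix.isUnit_iff_isUnit_det, isUnit_iff_ne_zero,
       Matrix.det_vandermonde_ne_zero_iff]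
    exact hvinj
  set S : Finset (Fin n) := Zf.attachFin hZ with hS
  set Φ : (Fin n → F) →ₗ[F] ({z // z ∈ S} → F) :=
    (LinearMap.funLeft F F (Subtype.val : {z // z ∈ S} → Fin n)).comp
      (Matrix.vandermonde (fun z : Fin n => α ^ (z : ℕ))).mulVecLin with hΦ
  have hVc : ∀ (z i : Fin n) (x : F),
      Matrix.vandermonde (fun z : Fin n => α ^ (z : ℕ)) z i * x
        = x * α ^ ((i : ℕ) * (z : ℕ)) := by
    intro z i x
    rw [Matrix.vandermonde_apply, ← pow_mul, mul_comm (z : ℕ), mul_comm]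
  have hker : cyclicCode (RingHom.id F) n α ↑Zf = LinearMap.ker Φ := by
    ext c
    have hmem : c ∈ cyclicCode (RingHom.id F) n α (↑Zf : Set ℕ) ↔
        ∀ z ∈ (↑Zf : Set ℕ), ∑ i : Fin n, c i * α ^ ((i : ℕ) * z) = 0 := Iff.rfl
    rw [hmem, LinearMap.mem_ker]
    constructor
    · intro h
      funext z
      have hz : ((z : Fin n) : ℕ) ∈ Zf := (Finset.mem_attachFin hZ).mp z.2
      have h2 := h _ hz
      simp only [hΦ, LinearMap.comp_apply, LinearMap.funLeft_apply,
        Matrix.mulVecLin_apply, Matrix.mulVec, Pi.zero_apply, dotProduct]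
      rw [← h2]
      exact Finset.sum_congr rfl fun i _ => hVc _ _ _
    · intro h z hz
      have hz' : z ∈ Zf := hz
      have hzlt : z < n := hZ z hz'
      have hzS : (⟨z, hzlt⟩ : Fin n) ∈ S := (Finset.mem_attachFin hZ).mpr hz'
      have h2 := congrFun h (⟨_, hzS⟩ : {z // z ∈ S})
      simp only [hΦ, LinearMap.comp_apply, LinearMap.funLeft_apply,
        Matrix.mulVecLin_apply, Matrix.mulVec, Pi.zero_apply, dotProduct] at h2
      rw [← h2]
      refine (Finset.sum_congr rfl fun i _ => ?_).symm
      exact hVc ⟨z, hzlt⟩ i (c i)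
  have hsurj : Function.Surjective Φ := by
    rw [hΦ, LinearMap.coe_comp]
    apply Function.Surjective.comp
    · exact LinearMap.funLeft_surjective_of_injective _ _ _ Subtype.val_injective
    · rw [Matrix.coe_mulVecLin]
      exact Matrix.mulVec_surjective_iff_isUnit.mpr hdet
  have hrn := LinearMap.finrank_range_add_finrank_ker Φ
  rw [LinearMap.range_eq_top.mpr hsurj] at hrn
  have h1 : Module.finrank F (⊤ : Submodule F ({z // z ∈ S} → F)) = Zf.card := by
    rw [finrank_top, Module.finrank_fintype_fun_eq_card, Fintype.card_coe, hS,
      Finset.card_attachFin]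
  have h2 : Module.finrank F (Fin n → F) = n := by
    rw [Module.finrank_fintype_fun_eq_card, Fintype.card_fin]
  rw [h1, h2] at hrn
  rw [hker]
  omega
lemma cardA (c m l u : ℕ) (hc : 0 < c) (hl : 0 < l) (hml : m = l + 2*u) :
    ((Finset.range m).image (· * c) ∪
      (Finset.range (u*c+1) ∪ Finset.Ico (m*c - u*c) (m*c))).card
      = m + 2*(u*c) - 2*u := by
  classical
  have hinj : Function.Injective (· * c) := fun a b h => Nat.eq_of_mul_eq_mul_right hc h
  have hum : 2*u < m := by omega
  have htn : 2*(u*c) < m*c := by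
    calc 2*(u*c) = (2*u)*c := by ring
    _ < m*c := (Nat.mul_lt_mul_right hc).mpr hum
  have hmul_le : ∀ a b : ℕ, a * c ≤ b * c ↔ a ≤ b := fun a b =>
    ⟨fun h => Nat.le_of_mul_le_mul_right h hc, fun h => Nat.mul_le_mul_right c h⟩
  have hsub : m*c - u*c = (m - u)*c := (Nat.sub_mul m u c).symm
  have hcard1 : ((Finset.range m).image (· * c)).card = m := by
    rw [Finset.card_image_of_injective _ hinj, Finset.card_range]
  have hdisj2 : Disjoint (Finset.range (u*c+1)) (Finset.Ico (m*c - u*c) (m*c)) := by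
    simp only [Finset.disjoint_left, Finset.mem_range, Finset.mem_Ico]
    intro a ha
    omega
  have hcard2 : (Finset.range (u*c+1) ∪ Finset.Ico (m*c - u*c) (m*c)).card
      = 2*(u*c) + 1 := by
    rw [Finset.card_union_of_disjoint hdisj2, Finset.card_range, Nat.card_Ico]
    omega
  have hinter : (Finset.range m).image (· * c) ∩
      (Finset.range (u*c+1) ∪ Finset.Ico (m*c - u*c) (m*c))
      = ((Finset.range (u+1)) ∪ (Finset.Ico (m-u) m)).image (· * c) := by
    ext x
    simp only [Finset.mem_inter, Finset.mem_image, Finset.mem_union, Finset.mem_range,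
      Finset.mem_Ico]
    constructor
    · rintro ⟨⟨j, hj, rfl⟩, hx⟩
      refine ⟨j, ?_, rfl⟩
      rcases hx with h | h
      · left
        have : j * c ≤ u * c := by omega
        have := (hmul_le j u).mp this
        omega
      · right
        rw [hsub] at h
        have := (hmul_le (m-u) j).mp h.1
        omega
    · rintro ⟨j, hj, rfl⟩
      rcases hj with h | h
      · have hju : j ≤ u := by omega
        have h1 : j * c ≤ u * c := (hmul_le j u).mpr hju
        exact ⟨⟨j, by omega, rfl⟩, Or.inl (by omega)⟩
      · have h1 : (m - u) * c ≤ j * c := (hmul_le (m-u) j).mpr h.1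
        have h2 : j * c < m * c := (Nat.mul_lt_mul_right hc).mpr h.2
        exact ⟨⟨j, h.2, rfl⟩, Or.inr (by omega)⟩
  have hdisj3 : Disjoint (Finset.range (u+1)) (Finset.Ico (m-u) m) := by
    simp only [Finset.disjoint_left, Finset.mem_range, Finset.mem_Ico]
    intro a ha
    omega
  have hcard3 : (((Finset.range (u+1)) ∪ (Finset.Ico (m-u) m)).image (· * c)).card
      = 2*u + 1 := by
    rw [Finset.card_image_of_injective _ hinj, Finset.card_union_of_disjoint hdisj3,
      Finset.card_range, Nat.card_Ico]
    omega
  have hmain := Finset.card_union_add_card_inter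
    ((Finset.range m).image (· * c))
    (Finset.range (u*c+1) ∪ Finset.Ico (m*c - u*c) (m*c))
  rw [hinter, hcard1, hcard2, hcard3] at hmain
  omega


/-- Theorem 3.3: under the stated hypotheses, the cyclic code of length `n` over `F`
with defining set of exponents `Z = L ∪ D` has dimension exactly `k`. -/
theorem stmt12
    (F : Type*) [Field F] [Fintype F] (n k r : ℕ)
    (hn : 0 < n) (hk : 0 < k) (hr : 0 < r) (hrk : r ≤ k)
    (α : F) (hα : orderOf α = n)
    (hr1n : r + 1 ∣ n) (hrdk : r ∣ k) (hkn : k * (r + 1) ≤ n * r)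
    (heven : Even (n / (r + 1) - k / r))
    (t : ℕ) (ht : t = (n - k * (r + 1) / r) / 2)
    (L D : Set ℕ)
    (hL : L = {i | i < n ∧ (r + 1) ∣ i})
    (hD : D = {d : ℕ | ∃ s : ℤ, -(t : ℤ) ≤ s ∧ s ≤ (t : ℤ) ∧ (d : ℤ) = s % (n : ℤ)})
    : Module.finrank F (cyclicCode (RingHom.id F) n α (L ∪ D)) = k := by
  classical
  obtain ⟨m, hm⟩ := hr1n
  obtain ⟨l, hlk⟩ := hrdk
  have hc : 0 < r + 1 := Nat.succ_pos r
  have hm' : n = m * (r+1) := by rw [hm, Nat.mul_comm]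
  have hl0 : 0 < l := by
    rcases Nat.eq_zero_or_pos l with h | h
    · subst h; simp at hlk; omega
    · exact h
  have hdiv1 : n / (r+1) = m := by rw [hm]; exact Nat.mul_div_cancel_left m hc
  have hdiv2 : k / r = l := by rw [hlk]; exact Nat.mul_div_cancel_left l hr
  have h3 : k * (r+1) = r * (l * (r+1)) := by rw [hlk]; ring
  have hdiv3 : k * (r+1) / r = l * (r+1) := by
    rw [h3]; exact Nat.mul_div_cancel_left _ hr
  have hlm : l ≤ m := by
    have hle : l * (r*(r+1)) ≤ m * (r*(r+1)) := by
      calc l * (r*(r+1)) = k * (r+1) := by rw [hlk]; ring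
        _ ≤ n * r := hkn
        _ = m * (r*(r+1)) := by rw [hm']; ring
    exact Nat.le_of_mul_le_mul_right hle (by positivity)
  rw [hdiv1, hdiv2] at heven
  obtain ⟨u, hu⟩ := heven
  have hml : m = l + 2*u := by omega
  have ht' : t = u * (r+1) := by
    have e1 : n - k*(r+1)/r = 2*(u*(r+1)) := by
      rw [hdiv3]
      apply Nat.sub_eq_of_eq_add
      rw [hm', hml]; ring
    rw [ht, e1]
    exact Nat.mul_div_cancel_left _ (by norm_num)
  have htn : 2*(u*(r+1)) < n := by
    calc 2*(u*(r+1)) = (2*u)*(r+1) := by ring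
      _ < m*(r+1) := (Nat.mul_lt_mul_right hc).mpr (by omega)
      _ = n := hm'.symm
  have h2t : 2*t < n := by rw [ht']; exact htn
  set Lf : Finset ℕ := (Finset.range m).image (· * (r+1)) with hLf
  set Df : Finset ℕ := Finset.range (t+1) ∪ Finset.Ico (n-t) n with hDf
  have hLset : L = ↑Lf := by
    rw [hL]
    ext x
    simp only [Set.mem_setOf_eq, hLf, Finset.coe_image, Set.mem_image, Finset.mem_coe,
      Finset.mem_range]
    constructor
    · rintro ⟨hx, j, rfl⟩
      have hjm : j < m := by
        have : (r+1)*j < (r+1)*m := by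
          calc (r+1)*j < n := hx
            _ = (r+1)*m := hm
        exact Nat.lt_of_mul_lt_mul_left this
      exact ⟨j, hjm, by ring⟩
    · rintro ⟨j, hj, rfl⟩
      refine ⟨?_, ⟨j, by ring⟩⟩
      calc j*(r+1) < m*(r+1) := (Nat.mul_lt_mul_right hc).mpr hj
        _ = n := hm'.symm
  have hDset : D = ↑Df := by
    rw [hD]
    ext x
    simp only [Set.mem_setOf_eq, hDf, Finset.coe_union, Set.mem_union, Finset.mem_coe,
      Finset.mem_range, Finset.mem_Ico]
    constructor
    · rintro ⟨s, hs1, hs2, hx⟩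
      rcases le_or_gt 0 s with hs | hs
      · have hmod : s % (n:ℤ) = s := Int.emod_eq_of_lt hs (by omega)
        rw [hmod] at hx
        left; omega
      · have hmod : s % (n:ℤ) = s + n := by
          have h1 : (s + (n:ℤ) * 1) % (n:ℤ) = s % n := Int.add_mul_emod_self_left s (n:ℤ) 1
          rw [mul_one] at h1
          rw [← h1]
          exact Int.emod_eq_of_lt (by omega) (by omega)
        rw [hmod] at hx
        right; omega
    · intro hx
      rcases hx with h | h
      · exact ⟨(x:ℤ), by omega, by omega, (Int.emod_eq_of_lt (by omega) (by omega)).symm⟩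
      · refine ⟨(x:ℤ) - n, by omega, by omega, ?_⟩
        have h1 : ((x:ℤ) - n + (n:ℤ) * 1) % (n:ℤ) = ((x:ℤ) - n) % n :=
          Int.add_mul_emod_self_left ((x:ℤ) - n) (n:ℤ) 1
        rw [mul_one] at h1
        have h2 : ((x:ℤ) - n) % n = (x:ℤ) - n + n := by
          rw [← h1]
          exact Int.emod_eq_of_lt (by omega) (by omega)
        rw [h2]; ring
  have hbound : ∀ x ∈ Lf ∪ Df, x < n := by
    intro x hx
    rw [Finset.mem_union] at hx
    rcases hx with hx | hx
    · rw [hLf, Finset.mem_image] at hx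
      obtain ⟨j, hj, rfl⟩ := hx
      rw [Finset.mem_range] at hj
      calc j*(r+1) < m*(r+1) := (Nat.mul_lt_mul_right hc).mpr hj
        _ = n := hm'.symm
    · rw [hDf, Finset.mem_union, Finset.mem_range, Finset.mem_Ico] at hx
      omega
  have hcard : (Lf ∪ Df).card = m + 2*(u*(r+1)) - 2*u := by
    rw [hLf, hDf, ht', hm']
    exact cardA (r+1) m l u hc hl0 hml
  have hunion : L ∪ D = ↑(Lf ∪ Df) := by rw [hLset, hDset, ← Finset.coe_union]
  have e2 : m + 2*(u*(r+1)) - 2*u = m + 2*(u*r) := by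
    apply Nat.sub_eq_of_eq_add
    ring
  have e3 : n - (m + 2*(u*r)) = k := by
    apply Nat.sub_eq_of_eq_add
    rw [hm', hml, hlk]; ring
  rw [hunion, dim_cyclic F n α hα _ hbound, hcard, e2, e3]
end

section
/- Under the stated hypotheses, every nonzero codeword of the cyclic code C of length n over F with defining set of exponents Z = L ∪ D has Hamming weight at least n − k − k/r + 2. -/
lemma myZpowCongr {F : Type*} [Field F] {α : F} (hα0 : α ≠ 0) {n : ℕ}
    (h1 : α ^ n = 1) {a b : ℤ} (h : (n : ℤ) ∣ a - b) : α ^ a = α ^ b := by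
  obtain ⟨m, hm⟩ := h
  have ha : a = b + (n : ℤ) * m := by linarith
  rw [ha, zpow_add₀ hα0, zpow_mul, zpow_natCast, h1, one_zpow, mul_one]

lemma myPowInj {F : Type*} [Field F] {α : F} {n : ℕ} (hα0 : α ≠ 0)
    (hord : orderOf α = n) {a b : ℕ} (ha : a < n) (hb : b < n)
    (h : α ^ a = α ^ b) : a = b := by
  wlog hab : a ≤ b generalizing a b
  · exact (this hb ha h.symm (le_of_not_ge hab)).symm
  have h2 : α ^ a * α ^ (b - a) = α ^ a * 1 := by
    rw [mul_one, ← pow_add, Nat.add_sub_cancel' hab, h]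
  have h3 : α ^ (b - a) = 1 := mul_left_cancel₀ (pow_ne_zero a hα0) h2
  have h4 : n ∣ b - a := hord ▸ orderOf_dvd_of_pow_eq_one h3
  have h5 : b - a = 0 := Nat.eq_zero_of_dvd_of_lt h4 (lt_of_le_of_lt (Nat.sub_le b a) hb) |>.symm ▸ rfl
  omega

lemma myBCH {F : Type*} [Field F] [DecidableEq F] {n : ℕ} {α : F} (hα0 : α ≠ 0)
    (hord : orderOf α = n) (t : ℕ) (c : Fin n → F)
    (hc : ∀ s : ℤ, -(t : ℤ) ≤ s → s ≤ (t : ℤ) →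
      ∑ i : Fin n, c i * α ^ (((i : ℕ) : ℤ) * s) = 0)
    (hne : c ≠ 0) : 2 * t + 2 ≤ hammingNorm c := by
  by_contra hlt
  push_neg at hlt
  set S : Finset (Fin n) := Finset.univ.filter (fun i => c i ≠ 0) with hS
  have hw : hammingNorm c = S.card := rfl
  set w := S.card with hwdef
  have hwpos : 0 < w := by
    obtain ⟨i, hi⟩ := Function.ne_iff.mp hne
    simp only [Pi.zero_apply] at hi
    exact Finset.card_pos.mpr ⟨i, by simp [hS, hi]⟩
  have hwle : w ≤ 2 * t + 1 := by omega
  set e := S.orderIsoOfFin rfl with he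
  set f : Fin w → F := fun j => α ^ ((e j : Fin n) : ℕ) with hf
  have hfinj : Function.Injective f := by
    intro i j hij
    have h1 : ((e i : Fin n) : ℕ) = ((e j : Fin n) : ℕ) :=
      myPowInj hα0 hord (Fin.is_lt _) (Fin.is_lt _) hij
    exact e.injective (Subtype.ext (Fin.ext h1))
  set v : Fin w → F := fun j => c (e j) * α ^ (-(t : ℤ) * ((e j : Fin n) : ℕ)) with hv
  have hfv : ∀ i : Fin w, ∑ j : Fin w, v j * f j ^ (i : ℕ) = 0 := by
    intro i
    have hs1 : -(t : ℤ) ≤ (i : ℕ) - (t : ℤ) := by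
      have : (0 : ℤ) ≤ (i : ℕ) := Int.natCast_nonneg _
      linarith
    have hs2 : ((i : ℕ) : ℤ) - (t : ℤ) ≤ (t : ℤ) := by
      have : (i : ℕ) < w := i.is_lt
      have : ((i : ℕ) : ℤ) ≤ 2 * t := by exact_mod_cast le_trans (Nat.lt_succ_iff.mp (by omega)) le_rfl
      linarith
    have hsum := hc (((i : ℕ) : ℤ) - (t : ℤ)) hs1 hs2
    calc ∑ j : Fin w, v j * f j ^ (i : ℕ)
        = ∑ j : Fin w, c (e j) * α ^ ((((e j : Fin n) : ℕ) : ℤ) * (((i : ℕ) : ℤ) - (t : ℤ))) := by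
          refine Finset.sum_congr rfl fun j _ => ?_
          show c (e j) * α ^ (-(t : ℤ) * ((e j : Fin n) : ℕ)) * (α ^ ((e j : Fin n) : ℕ)) ^ (i : ℕ) = _
          rw [mul_assoc, ← pow_mul, ← zpow_natCast α (((e j : Fin n) : ℕ) * (i : ℕ)),
            ← zpow_add₀ hα0]
          congr 2
          push_cast
          ring
      _ = ∑ x ∈ S, c x * α ^ (((x : ℕ) : ℤ) * (((i : ℕ) : ℤ) - (t : ℤ))) := by
          rw [← Finset.sum_attach S (fun x => c x * α ^ (((x : ℕ) : ℤ) * (((i : ℕ) : ℤ) - (t : ℤ))))]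
          rw [← Finset.univ_eq_attach]
          exact Fintype.sum_equiv e.toEquiv _ _ (fun j => rfl)
      _ = ∑ x : Fin n, c x * α ^ (((x : ℕ) : ℤ) * (((i : ℕ) : ℤ) - (t : ℤ))) := by
          refine Finset.sum_subset (Finset.subset_univ S) fun x _ hx => ?_
          have : c x = 0 := by
            by_contra hcx
            exact hx (by simp [hS, hcx])
          rw [this, zero_mul]
      _ = 0 := hsum
  have hv0 : v = 0 := Matrix.eq_zero_of_forall_pow_sum_mul_pow_eq_zero hfinj hfv
  set j0 : Fin w := ⟨0, hwpos⟩
  have h1 : v j0 = 0 := by rw [hv0]; rfl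
  have h2 : c (e j0) ≠ 0 := (Finset.mem_filter.mp (e j0).2).2
  exact (mul_ne_zero h2 (zpow_ne_zero _ hα0)) h1

/-- Theorem 3.3: under the stated hypotheses, every nonzero codeword of the cyclic code
of length `n` over `F` with defining set of exponents `Z = L ∪ D` has Hamming weight at
least `n − k − k/r + 2`. -/
theorem stmt13
    (F : Type*) [Field F] [Fintype F] [DecidableEq F] (n k r : ℕ)
    (hn : 0 < n) (hk : 0 < k) (hr : 0 < r) (hrk : r ≤ k)
    (α : F) (hα : orderOf α = n)
    (hr1n : r + 1 ∣ n) (hrdk : r ∣ k) (hkn : k * (r + 1) ≤ n * r)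
    (heven : Even (n / (r + 1) - k / r))
    (t : ℕ) (ht : t = (n - k * (r + 1) / r) / 2)
    (L D : Set ℕ)
    (hL : L = {i | i < n ∧ (r + 1) ∣ i})
    (hD : D = {d : ℕ | ∃ s : ℤ, -(t : ℤ) ≤ s ∧ s ≤ (t : ℤ) ∧ (d : ℤ) = s % (n : ℤ)})
    : ∀ c ∈ cyclicCode (RingHom.id F) n α (L ∪ D), c ≠ 0 →
      (n : ℤ) - (k : ℤ) - ((k / r : ℕ) : ℤ) + 2 ≤ (hammingNorm c : ℤ) := by
  intro c hcmem hcne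
  have h1 : α ^ n = 1 := by rw [← hα]; exact pow_orderOf_eq_one α
  have hα0 : α ≠ 0 := fun h => one_ne_zero (α := F) (by rw [← h1, h, zero_pow hn.ne'])
  -- parity-check equations for all exponents in [-t, t]
  have hc : ∀ s : ℤ, -(t : ℤ) ≤ s → s ≤ (t : ℤ) →
      ∑ i : Fin n, c i * α ^ (((i : ℕ) : ℤ) * s) = 0 := by
    intro s hs1 hs2
    have hnz : (n : ℤ) ≠ 0 := by exact_mod_cast hn.ne'
    set d : ℕ := (s % (n : ℤ)).toNat with hd
    have hdeq : (d : ℤ) = s % (n : ℤ) := Int.toNat_of_nonneg (Int.emod_nonneg s hnz)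
    have hdD : d ∈ D := by rw [hD]; exact ⟨s, hs1, hs2, hdeq⟩
    have h0 := hcmem d (Or.inr hdD)
    rw [← h0]
    refine Finset.sum_congr rfl fun i _ => ?_
    simp only [RingHom.id_apply]
    congr 1
    rw [← zpow_natCast α ((i : ℕ) * d)]
    refine myZpowCongr hα0 h1 ?_
    have hsd : (n : ℤ) ∣ s - d := by
      rw [hdeq, Int.emod_def]
      exact ⟨s / n, by ring⟩
    have : ((i : ℕ) : ℤ) * s - (((i : ℕ) * d : ℕ) : ℤ) = ((i : ℕ) : ℤ) * (s - d) := by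
      push_cast; ring
    rw [this]
    exact Dvd.dvd.mul_left hsd _
  have hbch : 2 * t + 2 ≤ hammingNorm c := myBCH hα0 hα t c hc hcne
  -- arithmetic
  obtain ⟨a, hna⟩ := hr1n
  obtain ⟨b, hkb⟩ := hrdk
  have hkr : k / r = b := by rw [hkb]; exact Nat.mul_div_cancel_left b hr
  have hnr1 : n / (r + 1) = a := by rw [hna]; exact Nat.mul_div_cancel_left a (by omega)
  have hba : b ≤ a := by
    have h' : (r * (r + 1)) * b ≤ (r * (r + 1)) * a := by
      calc (r * (r + 1)) * b = (r * b) * (r + 1) := by ring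
        _ ≤ ((r + 1) * a) * r := by rw [← hkb, ← hna]; exact hkn
        _ = (r * (r + 1)) * a := by ring
    exact Nat.le_of_mul_le_mul_left h' (by positivity)
  rw [hnr1, hkr] at heven
  obtain ⟨m, hm⟩ := heven
  have ham : a = b + 2 * m := by omega
  have h5 : k * (r + 1) / r = b * (r + 1) := by
    have : k * (r + 1) = r * (b * (r + 1)) := by rw [hkb]; ring
    rw [this, Nat.mul_div_cancel_left _ hr]
  have h6 : t = (r + 1) * m := by
    rw [ht, h5, hna, ham]
    have h7 : (r + 1) * (b + 2 * m) - b * (r + 1) = 2 * ((r + 1) * m) := by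
      have : (r + 1) * (b + 2 * m) = b * (r + 1) + 2 * ((r + 1) * m) := by ring
      omega
    rw [h7, Nat.mul_div_cancel_left _ (by norm_num)]
  have heq : (n : ℤ) - (k : ℤ) - ((k / r : ℕ) : ℤ) + 2 = 2 * (t : ℤ) + 2 := by
    rw [hkr, h6]
    push_cast [hna, hkb, ham]
    ring
  rw [heq]
  exact_mod_cast hbch
end

section
/- Under the stated hypotheses, the cyclic code C of length n over F with defining set of exponents Z = L ∪ D has locality r: for every coordinate position i ∈ {0, …, n−1} there exist a set R ⊆ {0, …, n−1}\{i} with |R| ≤ r and scalars (λ_j)_{j∈R} in F such that c_i = Σ_{j∈R} λ_j c_j for every codeword c ∈ C. -/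
open Finset

theorem geom_sum_eq_ite_of_pow_eq_one {K : Type*} [Field K] [DecidableEq K] {x : K} {N : ℕ}
    (hx : x ^ N = 1) :
    ∑ m ∈ range N, x ^ m = if x = 1 then (N : K) else 0 := by
  split_ifs with h
  · simp [h]
  · rw [geom_sum_eq h, hx, sub_self, zero_div]

theorem IsPrimitiveRoot.sum_filter_modEq_eq_zero {K ι : Type*} [Field K] {ζ : K} {N : ℕ}
    [NeZero N] (hζ : IsPrimitiveRoot ζ N) (s : Finset ι) (e : ι → ℕ) (c : ι → K)
    (h : ∀ m < N, ∑ j ∈ s, c j * ζ ^ (e j * m) = 0) (a : ℕ) :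
    ∑ j ∈ s with e j ≡ a [MOD N], c j = 0 := by
  classical
  set x : ι → K := fun j => (ζ ^ a)⁻¹ * ζ ^ e j
  have hx_root (j : ι) : x j ^ N = 1 := by
    rw [mul_pow, inv_pow, ← pow_mul, ← pow_mul, mul_comm a, mul_comm (e j), pow_mul, pow_mul,
      hζ.pow_eq_one, one_pow, one_pow, inv_one, one_mul]
  have hx_eq_one (j : ι) : x j = 1 ↔ e j ≡ a [MOD N] := by
    rw [inv_mul_eq_one₀ (pow_ne_zero _ (hζ.ne_zero (NeZero.ne N))),
      (hζ.isOfFinOrder (NeZero.ne N)).pow_eq_pow_iff_modEq, ← hζ.eq_orderOf]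
    exact Nat.ModEq.comm
  have hN_sum : (N : K) * ∑ j ∈ s with e j ≡ a [MOD N], c j = 0 := calc
    _ = ∑ j ∈ s, c j * ∑ m ∈ range N, x j ^ m := by
      rw [mul_sum, sum_filter]
      refine sum_congr rfl fun j _ => ?_
      rw [geom_sum_eq_ite_of_pow_eq_one (hx_root j), if_congr (hx_eq_one j) rfl rfl]
      split_ifs <;> ring
    _ = ∑ m ∈ range N, (ζ ^ a)⁻¹ ^ m * ∑ j ∈ s, c j * ζ ^ (e j * m) := by
      simp only [mul_sum]
      rw [sum_comm]
      refine sum_congr rfl fun m _ => sum_congr rfl fun j _ => ?_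
      rw [mul_pow, pow_mul]
      ring
    _ = 0 := sum_eq_zero fun m hm => by rw [h m (mem_range.1 hm), mul_zero]
  exact (mul_eq_zero.1 hN_sum).resolve_left hζ.neZero'.out

theorem card_filter_modEq_le {n N : ℕ} (hN : N ∣ n) (a : ℕ) :
    #{j : Fin n | (j : ℕ) ≡ a [MOD N]} ≤ n / N := by
  calc _ ≤ #(range (n / N)) := by
        refine card_le_card_of_injOn (fun j => (j : ℕ) / N) (fun j _ => ?_) ?_
        · exact mem_range.2 (Nat.div_lt_div_of_lt_of_dvd hN j.isLt)
        · intro j₁ hj₁ j₂ hj₂ hdiv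
          simp only [coe_filter, mem_univ, true_and, Set.mem_ofPred_eq] at hj₁ hj₂
          rw [Fin.ext_iff, ← Nat.div_add_mod (j₁ : ℕ) N, ← Nat.div_add_mod (j₂ : ℕ) N]
          rw [show (j₁ : ℕ) / N = (j₂ : ℕ) / N from hdiv, hj₁.trans hj₂.symm]
    _ = n / N := card_range _

theorem hasLocality_of_forall_exists_sum_eq_zero {K : Type*} [Field K] {n r : ℕ}
    {C : Set (Fin n → K)}
    (h : ∀ i, ∃ S : Finset (Fin n), i ∈ S ∧ #S ≤ r + 1 ∧ ∀ c ∈ C, ∑ j ∈ S, c j = 0) :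
    HasLocality C r := by
  classical
  intro i
  obtain ⟨S, hiS, hcard, hsum⟩ := h i
  refine ⟨S.erase i, fun _ => -1, notMem_erase i S, ?_, fun c hc => ?_⟩
  · rw [card_erase_of_mem hiS]
    omega
  · have := add_sum_erase S c hiS
    rw [hsum c hc] at this
    simp only [neg_one_mul, sum_neg_distrib]
    exact eq_neg_of_add_eq_zero_left this

theorem stmt14_general
    (F : Type*) [Field F] (n r : ℕ)
    (α : F) (hα : orderOf α = n)
    (hr1n : r + 1 ∣ n)
    (L D : Set ℕ)
    (hL : L = {i | i < n ∧ (r + 1) ∣ i})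
    : HasLocality (↑(cyclicCode (RingHom.id F) n α (L ∪ D)) : Set (Fin n → F)) r := by
  refine hasLocality_of_forall_exists_sum_eq_zero fun i => ?_
  set N := n / (r + 1)
  have : NeZero N := ⟨(Nat.div_pos (Nat.le_of_dvd i.pos hr1n) r.succ_pos).ne'⟩
  have hβ : IsPrimitiveRoot (α ^ (r + 1)) N :=
    (hα ▸ IsPrimitiveRoot.orderOf α).pow i.pos (Nat.mul_div_cancel' hr1n).symm
  refine ⟨({j : Fin n | (j : ℕ) ≡ i [MOD N]} : Finset (Fin n)),
    mem_filter.2 ⟨mem_univ i, .refl _⟩, ?_, fun c hc => ?_⟩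
  · calc _ ≤ n / N := card_filter_modEq_le (Nat.div_dvd_of_dvd hr1n) i
      _ = r + 1 := Nat.div_div_self hr1n i.pos.ne'
  · refine hβ.sum_filter_modEq_eq_zero univ Fin.val c (fun m hm => ?_) i
    have hmL : (r + 1) * m ∈ L := hL ▸ ⟨(Nat.lt_div_iff_mul_lt' hr1n m).1 hm, dvd_mul_right _ _⟩
    simpa [← pow_mul, mul_left_comm] using hc _ (Or.inl hmL)

/-- Theorem 3.3: under the stated hypotheses, the cyclic code of length `n` over `F`
with defining set of exponents `Z = L ∪ D` has locality `r`. -/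
theorem stmt14
    (F : Type*) [Field F] [Fintype F] (n k r : ℕ)
    (hn : 0 < n) (hk : 0 < k) (hr : 0 < r) (hrk : r ≤ k)
    (α : F) (hα : orderOf α = n)
    (hr1n : r + 1 ∣ n) (hrdk : r ∣ k) (hkn : k * (r + 1) ≤ n * r)
    (heven : Even (n / (r + 1) - k / r))
    (t : ℕ) (ht : t = (n - k * (r + 1) / r) / 2)
    (L D : Set ℕ)
    (hL : L = {i | i < n ∧ (r + 1) ∣ i})
    (hD : D = {d : ℕ | ∃ s : ℤ, -(t : ℤ) ≤ s ∧ s ≤ (t : ℤ) ∧ (d : ℤ) = s % (n : ℤ)})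
    : HasLocality (↑(cyclicCode (RingHom.id F) n α (L ∪ D)) : Set (Fin n → F)) r :=
  stmt14_general F n r α hα hr1n L D hL
end

section
/- Under the stated hypotheses, the cyclic code C of length n over F with defining set of exponents Z = L ∪ D is an LCD code, i.e., C ∩ C^⊥ = {0}. -/
/-- Theorem 3.5: under the stated hypotheses, the cyclic code of length `n` over `F`
with defining set of exponents `Z = L ∪ D` is an LCD code. -/
theorem stmt15 (F : Type*) [Field F] [Fintype F]
    (n k r : ℕ)
    (hn : 0 < n) (hk : 0 < k) (hr : 0 < r) (hrk : r ≤ k)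
    (α : F) (hα : orderOf α = n)
    (hr1n : r + 1 ∣ n) (hkn : k * (r + 1) ≤ n * r)
    (t a : ℕ) (ht : t = (n * r - k * (r + 1)) / (2 * r)) (ha : a = t % (r + 1))
    (hdvd : (2 * (r : ℤ)) ∣ ((n * r / (r + 1) : ℕ) : ℤ) - (k : ℤ) - 2 * (a : ℤ))
    (L D : Set ℕ)
    (hL : L = {i | i < n ∧ (r + 1) ∣ i})
    (hD : D = {d : ℕ | ∃ s : ℤ, -(t : ℤ) ≤ s ∧ s ≤ (t : ℤ) ∧ (d : ℤ) = s % (n : ℤ)})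
    : IsLCD (cyclicCode (RingHom.id F) n α (L ∪ D)) := by
  classical
  have hα1 : α ^ n = 1 := hα ▸ pow_orderOf_eq_one α
  -- every element of the defining set is < n
  have hZlt : ∀ z ∈ L ∪ D, z < n := by
    intro z hz
    rcases hz with hz | hz
    · rw [hL] at hz; exact hz.1
    · rw [hD] at hz
      obtain ⟨s, _, _, hs⟩ := hz
      have h1 : s % (n : ℤ) < n := Int.emod_lt_of_pos s (by exact_mod_cast hn)
      omega
  -- the defining set is symmetric under negation mod n
  have hsymm : ∀ z, 0 < z → z < n → (n - z) ∈ L ∪ D → z ∈ L ∪ D := by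
    intro z hz0 hzn hmem
    rcases hmem with hmem | hmem
    · left
      rw [hL] at hmem ⊢
      refine ⟨hzn, ?_⟩
      have h2 : (r + 1) ∣ (n - (n - z)) := Nat.dvd_sub hr1n hmem.2
      rwa [Nat.sub_sub_self hzn.le] at h2
    · right
      rw [hD] at hmem ⊢
      obtain ⟨s, hs1, hs2, hs3⟩ := hmem
      refine ⟨-s, by omega, by omega, ?_⟩
      have h4 : s % (n : ℤ) = (n : ℤ) - z := by
        rw [← hs3]; omega
      have h5 : (n : ℤ) ∣ (z : ℤ) - (-s) := by
        have hdiv := Int.emod_add_mul_ediv s (n : ℤ)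
        refine ⟨1 + s / (n : ℤ), ?_⟩
        rw [h4] at hdiv
        ring_nf
        ring_nf at hdiv
        linarith
      have h6 : (-s) % (n : ℤ) = (z : ℤ) % (n : ℤ) := Int.modEq_iff_dvd.mpr h5
      rw [h6, Int.emod_eq_of_lt (by positivity) (by exact_mod_cast hzn)]
  -- injectivity of z ↦ α^z on Fin n
  have hinj : Function.Injective (fun z : Fin n => α ^ (z : ℕ)) := by
    intro z1 z2 h
    have := pow_injOn_Iio_orderOf (x := α)
      (by rw [hα]; exact Set.mem_Iio.mpr z1.isLt)
      (by rw [hα]; exact Set.mem_Iio.mpr z2.isLt) h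
    exact Fin.ext this
  unfold IsLCD
  ext c
  simp only [Set.mem_inter_iff, Set.mem_singleton_iff]
  constructor
  · rintro ⟨hcC, hcD⟩
    have hC' : ∀ z ∈ L ∪ D, ∑ i : Fin n, c i * α ^ ((i : ℕ) * z) = 0 := by
      intro z hz
      have := hcC z hz
      simpa using this
    have key : ∀ z : Fin n, ∑ i : Fin n, c i * (α ^ (z : ℕ)) ^ (i : ℕ) = 0 := by
      intro z
      have hpow : ∀ i : Fin n, c i * (α ^ (z : ℕ)) ^ (i : ℕ) = c i * α ^ ((i : ℕ) * (z : ℕ)) :=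
        fun i => by rw [← pow_mul, mul_comm (z : ℕ)]
      rw [Finset.sum_congr rfl fun i _ => hpow i]
      by_cases hzZ : (z : ℕ) ∈ L ∪ D
      · exact hC' _ hzZ
      · -- z ∉ Z; then the exponential vector d is in the code
        have hz0 : 0 < (z : ℕ) := by
          rcases Nat.eq_zero_or_pos (z : ℕ) with h0 | h
          · exfalso; apply hzZ; left; rw [hL, h0]; exact ⟨hn, dvd_zero _⟩
          · exact h
        set d : Fin n → F := fun i => α ^ ((i : ℕ) * (z : ℕ)) with hd_def
        have hd : d ∈ cyclicCode (RingHom.id F) n α (L ∪ D) := by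
          intro w hw
          have hwn : w < n := hZlt w hw
          have hne : α ^ ((z : ℕ) + w) ≠ 1 := by
            intro h1
            have hdvd2 : n ∣ (z : ℕ) + w := by
              have h2 := orderOf_dvd_of_pow_eq_one h1
              rwa [hα] at h2
            have hzw : (z : ℕ) + w = n := by
              rcases hdvd2 with ⟨m, hm⟩
              have hzlt := z.isLt
              rcases m with _ | _ | m
              · omega
              · omega
              · have h3 : n * 2 ≤ n * (m + 1 + 1) := Nat.mul_le_mul_left n (by omega)
                omega
            have hwz : w = n - (z : ℕ) := by omega
            exact hzZ (hsymm _ hz0 z.isLt (hwz ▸ hw))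
          have hsum : ∀ i : Fin n,
              (RingHom.id F) (d i) * α ^ ((i : ℕ) * w) = (α ^ ((z : ℕ) + w)) ^ (i : ℕ) := by
            intro i
            simp only [hd_def, RingHom.id_apply]
            rw [← pow_add, ← Nat.left_distrib, mul_comm (i : ℕ), pow_mul]
          rw [Finset.sum_congr rfl fun i _ => hsum i, Fin.sum_univ_eq_sum_range,
            geom_sum_eq hne n, ← pow_mul, mul_comm ((z : ℕ) + w), pow_mul, hα1, one_pow,
            sub_self, zero_div]
        have horth := hcD d hd
        simpa [hd_def] using horth
    exact Matrix.eq_zero_of_forall_index_sum_mul_pow_eq_zero hinj key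
  · rintro rfl
    exact ⟨Submodule.zero_mem _, fun d _ => by simp⟩
end

section
/- Under the stated hypotheses, the cyclic code C of length n over F with defining set of exponents Z = L ∪ D has dimension exactly k as an F-vector space. -/
/-!
The parity checks are the rows of the Vandermonde matrix of the distinct powers `α ^ j`, `j < n`,
indexed by the exponents in `Z`; these rows are independent, so `dim C = n - |Z|`. The exponents
outside `Z` are the non-multiples of `r + 1` in the window `t < j < n - t`. The divisibility
hypothesis forces `nr - k(r + 1) ≡ 2a (mod 2r)` and hence pins down `t`: writing
`n = (r + 1)m` and `t = (r + 1)q + a`, one gets `rm = 2a + 2rq + k`, and counting the window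
gives exactly `k`.
-/

open Finset

theorem card_fin_subtype_val_mem_eq_ncard {n : ℕ} {Z : Set ℕ} [DecidablePred (· ∈ Z)]
    (hZ : Z ⊆ Set.Iio n) : Fintype.card {j : Fin n // (j : ℕ) ∈ Z} = Z.ncard := by
  rw [Fintype.card_eq_nat_card]
  exact Set.ncard_preimage_of_injective_subset_range Fin.val_injective (Fin.range_val ▸ hZ)

theorem finrank_cyclicCode_add_ncard {F : Type*} [Field F] {n : ℕ} {α : F}
    (hα : orderOf α = n) {Z : Set ℕ} (hZ : Z ⊆ Set.Iio n) :
    Module.finrank F (cyclicCode (RingHom.id F) n α Z) + Z.ncard = n := by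
  classical
  let V := Matrix.vandermonde fun j : Fin n => α ^ (j : ℕ)
  have hinj : Function.Injective fun j : Fin n => α ^ (j : ℕ) := fun i j hij =>
    Fin.ext (pow_injOn_Iio_orderOf (by simp [hα]) (by simp [hα]) hij)
  have hV : IsUnit V :=
    (Matrix.isUnit_iff_isUnit_det V).mpr (Matrix.det_vandermonde_ne_zero_iff.mpr hinj).isUnit
  let P : (Fin n → F) →ₗ[F] ({j : Fin n // (j : ℕ) ∈ Z} → F) :=
    LinearMap.funLeft F F (Subtype.val : {j : Fin n // (j : ℕ) ∈ Z} → Fin n) ∘ₗ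
      V.mulVecLin
  have hker : cyclicCode (RingHom.id F) n α Z = LinearMap.ker P := by
    ext c
    have hP (j : {j : Fin n // (j : ℕ) ∈ Z}) :
        P c j = ∑ i : Fin n, c i * α ^ ((i : ℕ) * j) := by
      simp [P, V, Matrix.mulVec, dotProduct, ← pow_mul, mul_comm]
    simp only [LinearMap.mem_ker, funext_iff, hP, Pi.zero_apply, Subtype.forall]
    exact ⟨fun h j hj => h j hj, fun h z hz => h ⟨z, hZ hz⟩ hz⟩
  have hsurj : Function.Surjective P :=
    (LinearMap.funLeft_surjective_of_injective F F _ Subtype.val_injective).comp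
      (Matrix.mulVec_surjective_iff_isUnit.mpr hV)
  have hrank := LinearMap.finrank_range_add_finrank_ker P
  rw [LinearMap.range_eq_top.mpr hsurj, finrank_top, Module.finrank_fintype_fun_eq_card,
    Module.finrank_fintype_fun_eq_card, Fintype.card_fin, ← hker,
    card_fin_subtype_val_mem_eq_ncard hZ] at hrank
  omega

theorem setOf_natCast_eq_emod_Icc {n t : ℕ} (ht : t < n) :
    {d : ℕ | ∃ s : ℤ, -(t : ℤ) ≤ s ∧ s ≤ (t : ℤ) ∧ (d : ℤ) = s % (n : ℤ)} =
      {d | d < n ∧ (d ≤ t ∨ n ≤ d + t)} := by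
  ext d
  simp only [Set.mem_ofPred_eq]
  constructor
  · rintro ⟨s, hs₁, hs₂, hds⟩
    rcases le_or_gt 0 s with hs | hs
    · rw [Int.emod_eq_of_lt hs (by omega)] at hds
      omega
    · rw [← Int.add_emod_right, Int.emod_eq_of_lt (by omega) (by omega)] at hds
      omega
  · rintro ⟨hd, hdt | hdt⟩
    · exact ⟨d, by omega, by omega, (Int.emod_eq_of_lt (by omega) (by omega)).symm⟩
    · refine ⟨d - n, by omega, by omega, ?_⟩
      rw [Int.sub_emod_right, Int.emod_eq_of_lt (by omega) (by omega)]

theorem Nat.Ioc_filter_dvd_card_eq_div_sub_div (d : ℕ) {a b : ℕ} (hab : a ≤ b) :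
    #{x ∈ Ioc a b | d ∣ x} = b / d - a / d := by
  have h := Nat.Ioc_filter_dvd_card_eq_div b d
  rw [← Ioc_union_Ioc_eq_Ioc (Nat.zero_le a) hab, filter_union,
    card_union_of_disjoint (disjoint_filter_filter (Ioc_disjoint_Ioc_of_le le_rfl)),
    Nat.Ioc_filter_dvd_card_eq_div] at h
  omega

theorem card_filter_not_dvd_window {d m q a n t : ℕ} (hd : 0 < d) (ha : a < d) (hn : n = d * m)
    (ht : t = d * q + a) (htn : 2 * t < n) :
    #{j ∈ range n | ¬(d ∣ j ∨ j ≤ t ∨ n ≤ j + t)} + 2 * t + m = n + 2 * q := by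
  subst hn ht
  have hqm : 2 * q < m := Nat.lt_of_mul_lt_mul_left (a := d) (by rw [mul_left_comm]; omega)
  obtain ⟨c, rfl⟩ : ∃ c, m = 2 * q + 1 + c := ⟨m - (2 * q + 1), by omega⟩
  have hn : d * (2 * q + 1 + c) = 2 * (d * q) + d + d * c := by ring
  have hqc : d * (q + c) = d * q + d * c := by ring
  set b := d * (q + c) + (d - a - 1)
  have hwindow : {j ∈ range (d * (2 * q + 1 + c)) | ¬(d ∣ j ∨ j ≤ d * q + a ∨
      d * (2 * q + 1 + c) ≤ j + (d * q + a))} = {j ∈ Ioc (d * q + a) b | ¬d ∣ j} := by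
    ext j
    simp only [mem_filter, mem_range, mem_Ioc]
    omega
  have hsplit := card_filter_add_card_filter_not (s := Ioc (d * q + a) b) (p := (d ∣ ·))
  rw [← hwindow, Nat.Ioc_filter_dvd_card_eq_div_sub_div d (by omega), Nat.card_Ioc,
    Nat.mul_add_div hd, Nat.mul_add_div hd, Nat.div_eq_of_lt ha,
    Nat.div_eq_of_lt (by omega : d - a - 1 < d)] at hsplit
  omega

theorem exists_block_decomposition {n k r t a : ℕ} (hk : 0 < k) (hr : 0 < r) (hr1n : r + 1 ∣ n)
    (hkn : k * (r + 1) ≤ n * r) (ht : t = (n * r - k * (r + 1)) / (2 * r))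
    (ha : a = t % (r + 1))
    (hdvd : (2 * (r : ℤ)) ∣ ((n * r / (r + 1) : ℕ) : ℤ) - (k : ℤ) - 2 * (a : ℤ)) :
    ∃ m q, n = (r + 1) * m ∧ t = (r + 1) * q + a ∧ r * m = 2 * a + 2 * (r * q) + k ∧
      2 * t < n := by
  obtain ⟨m, rfl⟩ := hr1n
  set q := t / (r + 1)
  have htq : t = (r + 1) * q + a := ha ▸ (Nat.div_add_mod t (r + 1)).symm
  have har : a < r + 1 := ha ▸ Nat.mod_lt t (Nat.succ_pos r)
  set e := ((r + 1) * m * r - k * (r + 1)) % (2 * r)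
  have hte : 2 * r * t + e = (r + 1) * m * r - k * (r + 1) := ht ▸ Nat.div_add_mod _ _
  have he : e < 2 * r := Nat.mod_lt _ (by omega)
  rw [mul_assoc, Nat.mul_div_cancel_left _ r.succ_pos] at hdvd
  obtain ⟨s, hs⟩ := hdvd
  push_cast at hs
  have hteZ : 2 * (r : ℤ) * t + e + k * (r + 1) = (r + 1) * m * r := by
    exact_mod_cast (by omega : 2 * r * t + e + k * (r + 1) = (r + 1) * m * r)
  have hkey : 2 * (r : ℤ) * (r + 1) * (q - s) = 2 * a - e := by
    push_cast [htq] at hteZ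
    linear_combination hteZ + (r + 1 : ℤ) * hs
  -- `|2a - e| < 2r(r + 1)`, so the multiple `2a - e` of `2r(r + 1)` vanishes.
  have hea : 2 * (a : ℤ) - e = 0 := by
    refine Int.eq_zero_of_abs_lt_dvd ⟨q - s, hkey.symm⟩ (abs_lt.mpr ⟨?_, ?_⟩) <;>
      nlinarith
  have hqs : (q : ℤ) = s := by
    have : (q : ℤ) - s = 0 := by
      simpa [hea, show (2 * r * (r + 1) : ℤ) ≠ 0 by positivity] using hkey
    linarith
  have hrm : r * m = 2 * a + 2 * (r * q) + k := by
    have : (r : ℤ) * m = 2 * a + 2 * (r * q) + k := by linear_combination hs - 2 * (r : ℤ) * hqs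
    exact_mod_cast this
  have hqm : 2 * q < m := Nat.lt_of_mul_lt_mul_left (a := r) (by rw [mul_left_comm]; omega)
  refine ⟨m, q, rfl, htq, hrm, ?_⟩
  have : (r + 1) * m = r * m + m := by ring
  have : (r + 1) * q = r * q + q := by ring
  omega

theorem stmt16_general (F : Type*) [Field F]
    (n k r : ℕ)
    (hk : 0 < k) (hr : 0 < r)
    (α : F) (hα : orderOf α = n)
    (hr1n : r + 1 ∣ n) (hkn : k * (r + 1) ≤ n * r)
    (t a : ℕ) (ht : t = (n * r - k * (r + 1)) / (2 * r)) (ha : a = t % (r + 1))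
    (hdvd : (2 * (r : ℤ)) ∣ ((n * r / (r + 1) : ℕ) : ℤ) - (k : ℤ) - 2 * (a : ℤ))
    (L D : Set ℕ)
    (hL : L = {i | i < n ∧ (r + 1) ∣ i})
    (hD : D = {d : ℕ | ∃ s : ℤ, -(t : ℤ) ≤ s ∧ s ≤ (t : ℤ) ∧ (d : ℤ) = s % (n : ℤ)})
    : Module.finrank F (cyclicCode (RingHom.id F) n α (L ∪ D)) = k := by
  obtain ⟨m, q, hnm, htq, hrm, htn⟩ := exists_block_decomposition hk hr hr1n hkn ht ha hdvd
  have hcompl := card_filter_not_dvd_window (d := r + 1) (by positivity)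
    (ha ▸ Nat.mod_lt t (by positivity)) hnm htq htn
  have hsplit := card_filter_add_card_filter_not (s := range n)
    (p := fun j => (r + 1) ∣ j ∨ j ≤ t ∨ n ≤ j + t)
  set S : Finset ℕ := {j ∈ range n | (r + 1) ∣ j ∨ j ≤ t ∨ n ≤ j + t}
  have hZ : L ∪ D = S := by
    rw [hL, hD, setOf_natCast_eq_emod_Icc (by omega)]
    ext j
    simp only [S, Set.mem_union, Set.mem_ofPred_eq, coe_filter, mem_range]
    tauto
  have hrank := finrank_cyclicCode_add_ncard hα (Z := S)
    fun j hj => mem_range.mp (mem_filter.mp hj).1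
  rw [Set.ncard_coe_finset] at hrank
  rw [card_range] at hsplit
  rw [hZ]
  have : (r + 1) * m = r * m + m := by ring
  have : (r + 1) * q = r * q + q := by ring
  omega

/-- Theorem 3.5: under the stated hypotheses, the cyclic code of length `n` over `F`
with defining set of exponents `Z = L ∪ D` has dimension exactly `k`. -/
theorem stmt16 (F : Type*) [Field F] [Fintype F]
    (n k r : ℕ)
    (hn : 0 < n) (hk : 0 < k) (hr : 0 < r) (hrk : r ≤ k)
    (α : F) (hα : orderOf α = n)
    (hr1n : r + 1 ∣ n) (hkn : k * (r + 1) ≤ n * r)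
    (t a : ℕ) (ht : t = (n * r - k * (r + 1)) / (2 * r)) (ha : a = t % (r + 1))
    (hdvd : (2 * (r : ℤ)) ∣ ((n * r / (r + 1) : ℕ) : ℤ) - (k : ℤ) - 2 * (a : ℤ))
    (L D : Set ℕ)
    (hL : L = {i | i < n ∧ (r + 1) ∣ i})
    (hD : D = {d : ℕ | ∃ s : ℤ, -(t : ℤ) ≤ s ∧ s ≤ (t : ℤ) ∧ (d : ℤ) = s % (n : ℤ)})
    : Module.finrank F (cyclicCode (RingHom.id F) n α (L ∪ D)) = k :=
  stmt16_general F n k r hk hr α hα hr1n hkn t a ht ha hdvd L D hL hD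
end

section
/- Under the stated hypotheses, every nonzero codeword of the cyclic code C of length n over F with defining set of exponents Z = L ∪ D has Hamming weight at least n − k − ⌈k/r⌉ + 1. -/
section
variable {F : Type*} [Field F]

private lemma zpow_emod_eq' {β : F} (hβ : β ≠ 0) {n : ℕ}
    (h1 : β ^ n = 1) (x : ℤ) : β ^ (x % (n : ℤ)) = β ^ x := by
  conv_rhs => rw [← Int.emod_add_mul_ediv x (n : ℤ)]
  rw [zpow_add₀ hβ, zpow_mul, zpow_natCast, h1, one_zpow, mul_one]

end

/-- Theorem 3.5: under the stated hypotheses, every nonzero codeword of the cyclic code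
of length `n` over `F` with defining set of exponents `Z = L ∪ D` has Hamming weight at
least `n − k − ⌈k/r⌉ + 1`. -/
theorem stmt17 (F : Type*) [Field F] [Fintype F] [DecidableEq F]
    (n k r : ℕ)
    (hn : 0 < n) (hk : 0 < k) (hr : 0 < r) (hrk : r ≤ k)
    (α : F) (hα : orderOf α = n)
    (hr1n : r + 1 ∣ n) (hkn : k * (r + 1) ≤ n * r)
    (t a : ℕ) (ht : t = (n * r - k * (r + 1)) / (2 * r)) (ha : a = t % (r + 1))
    (hdvd : (2 * (r : ℤ)) ∣ ((n * r / (r + 1) : ℕ) : ℤ) - (k : ℤ) - 2 * (a : ℤ))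
    (L D : Set ℕ)
    (hL : L = {i | i < n ∧ (r + 1) ∣ i})
    (hD : D = {d : ℕ | ∃ s : ℤ, -(t : ℤ) ≤ s ∧ s ≤ (t : ℤ) ∧ (d : ℤ) = s % (n : ℤ)})
    : ∀ c ∈ cyclicCode (RingHom.id F) n α (L ∪ D), c ≠ 0 →
      (n : ℤ) - (k : ℤ) - ((k ⌈/⌉ r : ℕ) : ℤ) + 1 ≤ (hammingNorm c : ℤ) := by
  intro c hc hc0
  by_contra hlt
  push_neg at hlt
  -- basic facts about α
  have hαn : α ^ n = 1 := hα ▸ pow_orderOf_eq_one α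
  have hα0 : α ≠ 0 := by
    intro h
    rw [h, zero_pow hn.ne'] at hαn
    exact zero_ne_one hαn
  -- arithmetic : hammingNorm c ≤ 2 * t + 1
  have hw21 : hammingNorm c ≤ 2 * t + 1 := by
    have hkcq : (k : ℤ) ≤ (r : ℤ) * ((k ⌈/⌉ r : ℕ) : ℤ) := by
      have := le_smul_ceilDiv (b := k) hr
      rw [smul_eq_mul] at this
      exact_mod_cast this
    have hm1 : t * (2 * r) ≤ n * r - k * (r + 1) := by
      rw [ht]; exact Nat.div_mul_le_self _ _
    have hm2 : n * r - k * (r + 1) < (t + 1) * (2 * r) := by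
      have h0 : (n * r - k * (r + 1)) / (2 * r) < (n * r - k * (r + 1)) / (2 * r) + 1 :=
        Nat.lt_succ_self _
      have := (Nat.div_lt_iff_lt_mul (by omega : 0 < 2 * r)).mp h0
      rwa [← ht] at this
    -- pass to ℤ
    have hmz : ((n * r - k * (r + 1) : ℕ) : ℤ) = (n : ℤ) * r - k * (r + 1) := by
      have : (k * (r + 1) : ℤ) ≤ (n : ℤ) * r := by exact_mod_cast hkn
      push_cast [Nat.cast_sub hkn]
      ring
    have key : (r : ℤ) * (hammingNorm c : ℤ) < (r : ℤ) * (2 * t + 2) := by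
      have h1 : (hammingNorm c : ℤ) ≤ (n : ℤ) - k - ((k ⌈/⌉ r : ℕ) : ℤ) := by omega
      have h2 : (r : ℤ) * (hammingNorm c : ℤ) ≤ (r : ℤ) * ((n : ℤ) - k - ((k ⌈/⌉ r : ℕ) : ℤ)) :=
        mul_le_mul_of_nonneg_left h1 (by positivity)
      have h3 : (r : ℤ) * ((n : ℤ) - k - ((k ⌈/⌉ r : ℕ) : ℤ)) ≤ (n : ℤ) * r - k * (r + 1) := by
        nlinarith [hkcq]
      have h4 : (n : ℤ) * r - k * (r + 1) < (r : ℤ) * (2 * t + 2) := by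
        have h5 : ((n * r - k * (r + 1) : ℕ) : ℤ) < (((t + 1) * (2 * r) : ℕ) : ℤ) := by
          exact_mod_cast hm2
        rw [hmz] at h5
        push_cast at h5
        linarith
      linarith
    have h6 : (hammingNorm c : ℤ) < 2 * t + 2 :=
      lt_of_mul_lt_mul_left key (by positivity : (0:ℤ) ≤ (r:ℤ))
    have h7 : hammingNorm c < 2 * t + 2 := by exact_mod_cast h6
    omega
  -- the support
  set S : Finset (Fin n) := Finset.univ.filter (fun i => c i ≠ 0) with hSdef
  have hScard : S.card = hammingNorm c := rfl
  -- the equivalence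
  let e : Fin S.card ≃ {x // x ∈ S} := S.equivFin.symm
  -- the evaluation points
  set β : Fin S.card → F := fun j => α ^ (((e j : Fin n) : ℕ)) with hβdef
  have hβ0 : ∀ j, β j ≠ 0 := fun j => pow_ne_zero _ hα0
  -- injectivity of β
  have hβinj : Function.Injective β := by
    intro j j' hjj
    have hu : IsUnit α := isUnit_iff_ne_zero.mpr hα0
    have hcoe : (hu.unit : F) = α := hu.unit_spec
    have hord : orderOf hu.unit = n := by
      rw [← orderOf_units, hcoe, hα]
    have hpow : hu.unit ^ (((e j : Fin n) : ℕ)) = hu.unit ^ (((e j' : Fin n) : ℕ)) := by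
      ext
      push_cast [hcoe]
      exact hjj
    have h1 : ((e j : Fin n) : ℕ) ∈ Set.Iio (orderOf hu.unit) := by
      rw [hord]; exact (e j : Fin n).isLt
    have h2 : ((e j' : Fin n) : ℕ) ∈ Set.Iio (orderOf hu.unit) := by
      rw [hord]; exact (e j' : Fin n).isLt
    have := pow_injOn_Iio_orderOf h1 h2 hpow
    have : (e j : Fin n) = (e j' : Fin n) := Fin.ext this
    exact e.injective (Subtype.ext this)
  -- the auxiliary vector
  set v : Fin S.card → F := fun j => c (e j) * (β j) ^ (-(t : ℤ)) with hvdef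
  -- the parity check equations give the Vandermonde system
  have hsys : ∀ u : Fin S.card, ∑ j : Fin S.card, v j * (β j) ^ (u : ℕ) = 0 := by
    intro u
    -- the exponent
    set d : ℕ := (((u : ℤ) - t) % (n : ℤ)).toNat with hddef
    have hdz : (d : ℤ) = ((u : ℤ) - t) % (n : ℤ) :=
      Int.toNat_of_nonneg (Int.emod_nonneg _ (by exact_mod_cast hn.ne'))
    have hdD : d ∈ D := by
      rw [hD]
      refine ⟨(u : ℤ) - t, by omega, ?_, hdz⟩
      have hu2 : (u : ℕ) < S.card := u.isLt
      have hu3 : S.card ≤ 2 * t + 1 := by rw [hScard]; exact hw21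
      omega
    have hcheck := hc d (Set.mem_union_right L hdD)
    simp only [RingHom.id_apply] at hcheck
    -- restrict the sum to the support
    have hrestrict : ∑ i ∈ S, c i * α ^ ((i : ℕ) * d) = 0 := by
      rw [← hcheck]
      refine Finset.sum_subset (Finset.subset_univ S) (fun i _ hi => ?_)
      have : c i = 0 := by
        by_contra hci
        exact hi (Finset.mem_filter.mpr ⟨Finset.mem_univ i, hci⟩)
      rw [this, zero_mul]
    -- reindex via e
    have hreindex : ∑ j : Fin S.card, c (e j) * α ^ (((e j : Fin n) : ℕ) * d) = 0 := by
      rw [← hrestrict, ← Finset.sum_coe_sort S (fun i => c i * α ^ ((i : ℕ) * d))]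
      exact Equiv.sum_comp e (fun x : {x // x ∈ S} => c x * α ^ (((x : Fin n) : ℕ) * d))
    rw [← hreindex]
    refine Finset.sum_congr rfl fun j _ => ?_
    -- termwise equality
    have hβn : (β j) ^ n = 1 := by
      show (α ^ (((e j : Fin n) : ℕ))) ^ n = 1
      rw [← pow_mul, mul_comm, pow_mul, hαn, one_pow]
    have hterm : α ^ (((e j : Fin n) : ℕ) * d) = (β j) ^ ((u : ℤ)) * (β j) ^ (-(t : ℤ)) := by
      rw [pow_mul]
      have h1 : (β j) ^ d = (β j) ^ ((d : ℤ)) := (zpow_natCast _ _).symm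
      calc (β j) ^ d = (β j) ^ ((d : ℤ)) := h1
        _ = (β j) ^ (((u : ℤ) - t) % (n : ℤ)) := by rw [hdz]
        _ = (β j) ^ ((u : ℤ) - t) := zpow_emod_eq' (hβ0 j) hβn _
        _ = (β j) ^ ((u : ℤ)) * (β j) ^ (-(t : ℤ)) := by
            rw [← zpow_add₀ (hβ0 j)]; ring_nf
    rw [hterm]
    show c (e j) * (β j) ^ (-(t : ℤ)) * (β j) ^ ((u : Fin S.card) : ℕ)
        = c (e j) * ((β j) ^ (((u : ℕ) : ℤ)) * (β j) ^ (-(t : ℤ)))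
    rw [zpow_natCast]
    ring
  -- Vandermonde: v = 0
  have hv0 : v = 0 := Matrix.eq_zero_of_forall_pow_sum_mul_pow_eq_zero hβinj hsys
  -- contradiction
  obtain ⟨i, hi⟩ : ∃ i, c i ≠ 0 := by
    by_contra h
    push_neg at h
    exact hc0 (funext h)
  have hiS : i ∈ S := Finset.mem_filter.mpr ⟨Finset.mem_univ i, hi⟩
  set j : Fin S.card := e.symm ⟨i, hiS⟩ with hjdef
  have hvj : v j = 0 := by rw [hv0]; rfl
  rw [hvdef] at hvj
  simp only [hjdef, Equiv.apply_symm_apply] at hvj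
  have this := hvj
  rcases mul_eq_zero.mp this with h | h
  · exact hi h
  · exact zpow_ne_zero _ (hβ0 j) h
end

section
/- Under the stated hypotheses, if in addition a = 0 or a = r, then every nonzero codeword of the cyclic code C of length n over F with defining set of exponents Z = L ∪ D has Hamming weight at least n − k − ⌈k/r⌉ + 2. -/
lemma pow_inj_of_orderOf {F : Type*} [Field F] {α : F} {n : ℕ} (hα : orderOf α = n)
    (hn : 0 < n) {i j : ℕ} (hi : i < n) (hj : j < n) (h : α ^ i = α ^ j) : i = j := by
  have hα0 : α ≠ 0 := by
    intro h0
    have h1 : α ^ n = 1 := hα ▸ pow_orderOf_eq_one α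
    rw [h0, zero_pow hn.ne'] at h1
    exact one_ne_zero h1.symm
  wlog hij : i ≤ j generalizing i j
  · exact (this hj hi h.symm (le_of_not_ge hij)).symm
  have h1 : α ^ (j - i) = 1 := by
    have hp : α ^ i * α ^ (j - i) = α ^ i * 1 := by
      rw [mul_one, ← pow_add, Nat.add_sub_cancel' hij, h]
    exact mul_left_cancel₀ (pow_ne_zero i hα0) hp
  have hd := orderOf_dvd_of_pow_eq_one h1
  rw [hα] at hd
  have := Nat.eq_zero_of_dvd_of_lt hd
  omega

lemma vmz {F : Type*} [Field F] {w : ℕ} (x v : Fin w → F)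
    (hx : Function.Injective x)
    (hv : ∀ j : Fin w, ∑ p : Fin w, v p * x p ^ (j : ℕ) = 0) : v = 0 := by
  have hdet : IsUnit (Matrix.vandermonde x).det := by
    rw [Matrix.det_vandermonde]
    refine IsUnit.mk0 _ (Finset.prod_ne_zero_iff.mpr fun i _ => Finset.prod_ne_zero_iff.mpr
      fun j hj => sub_ne_zero_of_ne fun h => ?_)
    rw [Finset.mem_Ioi] at hj
    exact absurd (hx h) (ne_of_gt hj)
  have hinj := Matrix.vecMul_injective_iff_isUnit.mpr ((Matrix.isUnit_iff_isUnit_det _).mpr hdet)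
  have h0 : Matrix.vecMul v (Matrix.vandermonde x) = Matrix.vecMul 0 (Matrix.vandermonde x) := by
    funext j
    rw [Matrix.zero_vecMul]
    simpa [Matrix.vecMul, dotProduct, Matrix.vandermonde] using hv j
  exact hinj h0

lemma bch_bound {F : Type*} [Field F] [DecidableEq F] {n : ℕ} (hn : 0 < n) (α : F)
    (hα : orderOf α = n) (c : Fin n → F) (b δ : ℕ)
    (hcheck : ∀ j < δ, ∑ i : Fin n, c i * α ^ ((i : ℕ) * (b + j)) = 0)
    (hc : c ≠ 0) : δ + 1 ≤ hammingNorm c := by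
  by_contra hlt
  push_neg at hlt
  classical
  set S : Finset (Fin n) := Finset.univ.filter (fun i => c i ≠ 0) with hS
  have hcard : S.card = hammingNorm c := rfl
  set e : Fin S.card ≃ S := S.equivFin.symm with he
  set x : Fin S.card → F := fun p => α ^ (((e p : Fin n)) : ℕ) with hxdef
  have hxinj : Function.Injective x := by
    intro p q hpq
    have := pow_inj_of_orderOf hα hn (e p : Fin n).isLt (e q : Fin n).isLt hpq
    exact e.injective (Subtype.ext (Fin.ext this))
  set v : Fin S.card → F := fun p => c (e p) * α ^ (((e p : Fin n) : ℕ) * b) with hvdef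
  have hv : ∀ j : Fin S.card, ∑ p : Fin S.card, v p * x p ^ (j : ℕ) = 0 := by
    intro j
    have hterm : ∀ p : Fin S.card,
        v p * x p ^ (j : ℕ) = c (e p) * α ^ (((e p : Fin n) : ℕ) * (b + (j : ℕ))) := by
      intro p
      rw [hvdef, hxdef, mul_assoc, ← pow_mul, ← pow_add, ← Nat.mul_add]
    rw [Finset.sum_congr rfl (fun p _ => hterm p)]
    have hsum : ∑ p : Fin S.card, c (e p) * α ^ (((e p : Fin n) : ℕ) * (b + (j : ℕ)))
        = ∑ i ∈ S, c i * α ^ ((i : ℕ) * (b + (j : ℕ))) := by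
      exact (Equiv.sum_comp e (fun s : S => c (s : Fin n) * α ^ (((s : Fin n) : ℕ) * (b + (j : ℕ))))).trans
        (Finset.sum_coe_sort S (fun i => c i * α ^ ((i : ℕ) * (b + (j : ℕ)))))
    rw [hsum]
    have hsub : ∑ i ∈ S, c i * α ^ ((i : ℕ) * (b + (j : ℕ)))
        = ∑ i : Fin n, c i * α ^ ((i : ℕ) * (b + (j : ℕ))) := by
      refine Finset.sum_subset (Finset.subset_univ S) fun i _ hi => ?_
      have : c i = 0 := by
        by_contra hci
        exact hi (Finset.mem_filter.mpr ⟨Finset.mem_univ i, hci⟩)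
      rw [this, zero_mul]
    rw [hsub]
    exact hcheck (j : ℕ) (by have := j.isLt; omega)
  have hv0 := vmz x v hxinj hv
  obtain ⟨i, hi⟩ := Function.ne_iff.mp hc
  have hiS : i ∈ S := Finset.mem_filter.mpr ⟨Finset.mem_univ i, by simpa using hi⟩
  have hvp : v (e.symm ⟨i, hiS⟩) = 0 := by rw [hv0]; rfl
  rw [hvdef] at hvp
  simp only [Equiv.apply_symm_apply] at hvp
  have hα0 : α ≠ 0 := by
    intro h0
    have h1 : α ^ n = 1 := hα ▸ pow_orderOf_eq_one α
    rw [h0, zero_pow hn.ne'] at h1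
    exact one_ne_zero h1.symm
  rcases mul_eq_zero.mp hvp with h | h
  · exact hi (by simpa using h)
  · exact pow_ne_zero _ hα0 h

/-- Theorem 3.5: under the stated hypotheses, if moreover `a = 0` or `a = r`, then every
nonzero codeword of the cyclic code of length `n` over `F` with defining set of exponents
`Z = L ∪ D` has Hamming weight at least `n − k − ⌈k/r⌉ + 2`. -/
theorem stmt18 (F : Type*) [Field F] [Fintype F] [DecidableEq F]
    (n k r : ℕ)
    (hn : 0 < n) (hk : 0 < k) (hr : 0 < r) (hrk : r ≤ k)
    (α : F) (hα : orderOf α = n)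
    (hr1n : r + 1 ∣ n) (hkn : k * (r + 1) ≤ n * r)
    (t a : ℕ) (ht : t = (n * r - k * (r + 1)) / (2 * r)) (ha : a = t % (r + 1))
    (hdvd : (2 * (r : ℤ)) ∣ ((n * r / (r + 1) : ℕ) : ℤ) - (k : ℤ) - 2 * (a : ℤ))
    (L D : Set ℕ)
    (hL : L = {i | i < n ∧ (r + 1) ∣ i})
    (hD : D = {d : ℕ | ∃ s : ℤ, -(t : ℤ) ≤ s ∧ s ≤ (t : ℤ) ∧ (d : ℤ) = s % (n : ℤ)})
    (haor : a = 0 ∨ a = r)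
    : ∀ c ∈ cyclicCode (RingHom.id F) n α (L ∪ D), c ≠ 0 →
      (n : ℤ) - (k : ℤ) - ((k ⌈/⌉ r : ℕ) : ℤ) + 2 ≤ (hammingNorm c : ℤ) := by
  intro c hc hc0
  set m := n * r / (r + 1) with hm
  have hnr : (r + 1) ∣ n * r := hr1n.mul_right r
  have hnm : n * r = m * (r + 1) := (Nat.div_mul_cancel hnr).symm
  have hkm : k ≤ m := Nat.le_of_mul_le_mul_right (by omega) (by omega : 0 < r + 1)
  -- 2r ∣ m - k over ℤ
  have h2a : (2 * (r : ℤ)) ∣ 2 * (a : ℤ) := by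
    rcases haor with h | h <;> subst h
    · simp
    · exact ⟨1, by ring⟩
  have hmk : (2 * (r : ℤ)) ∣ (m : ℤ) - (k : ℤ) := by
    have := dvd_add hdvd h2a
    simpa using this
  obtain ⟨bz, hbz⟩ := hmk
  have hbz0 : 0 ≤ bz := by nlinarith [hkm, (by exact_mod_cast hkm : (k : ℤ) ≤ (m : ℤ))]
  obtain ⟨b, rfl⟩ := Int.eq_ofNat_of_zero_le hbz0
  have hb : m = k + 2 * r * b := by exact_mod_cast (by linarith [hbz] : (m : ℤ) = k + 2 * r * b)
  have hrm : r ∣ m := by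
    have h1 : r ∣ m * (r + 1) := hnm ▸ ⟨n, by ring⟩
    exact (Nat.Coprime.dvd_of_dvd_mul_right (by simp : Nat.Coprime r (r+1)) h1)
  have hrk' : r ∣ k := by
    have : r ∣ 2 * r * b := ⟨2 * b, by ring⟩
    have h2 := Nat.dvd_sub hrm this
    rwa [hb, Nat.add_sub_cancel] at h2
  obtain ⟨q, hq⟩ := hrk'
  have hq1 : 1 ≤ q := by nlinarith
  have hnval : n = k + q + 2 * (b * (r + 1)) := by
    have h1 : n * r = (k + q + 2 * (b * (r + 1))) * r := by
      rw [hnm, hb, hq]; ring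
    exact Nat.eq_of_mul_eq_mul_right hr h1
  have htval : t = b * (r + 1) := by
    have h1 : n * r = k * (r + 1) + 2 * r * (b * (r + 1)) := by rw [hnm, hb]; ring
    have h2 : n * r - k * (r + 1) = 2 * r * (b * (r + 1)) := by omega
    rw [ht, h2, Nat.mul_div_cancel_left _ (by omega : 0 < 2 * r)]
  have hn2 : n = k + q + 2 * t := by omega
  have hceil : k ⌈/⌉ r = q := by
    rw [Nat.ceilDiv_eq_add_pred_div, hq]
    have h1 : (r * q + r - 1) = r * q + (r - 1) := by omega
    rw [h1, Nat.mul_add_div hr, Nat.div_eq_of_lt (by omega), Nat.add_zero]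
  have htn : 2 * t + 2 ≤ n := by omega
  -- parity checks on 2t+1 consecutive exponents starting at n - t
  have hcheck0 : ∀ z ∈ L ∪ D, ∑ i : Fin n, c i * α ^ ((i : ℕ) * z) = 0 := by
    intro z hz
    have := hc z hz
    simpa using this
  have key : ∀ (i z' : ℕ), α ^ (i * (z' % n)) = α ^ (i * z') := by
    intro i z'
    have h1 : α ^ (i * (z' % n)) = α ^ (i * (z' % n) % n) := by rw [← hα, pow_mod_orderOf]
    have h2 : α ^ (i * z') = α ^ (i * z' % n) := by rw [← hα, pow_mod_orderOf]
    rw [h1, h2]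
    congr 1
    conv_rhs => rw [Nat.mul_mod]
    rw [Nat.mul_mod, Nat.mod_mod_of_dvd _ dvd_rfl]
  have hcheck : ∀ j < 2 * t + 1, ∑ i : Fin n, c i * α ^ ((i : ℕ) * ((n - t) + j)) = 0 := by
    intro j hj
    set z := ((n - t) + j) % n with hz
    have hzD : z ∈ D := by
      rw [hD]
      refine ⟨(j : ℤ) - t, by omega, by omega, ?_⟩
      have hcast : ((z : ℕ) : ℤ) = (((n - t) + j : ℕ) : ℤ) % (n : ℤ) := by
        rw [hz]; push_cast; rfl
      rw [hcast]
      have h3 : (((n - t) + j : ℕ) : ℤ) = ((j : ℤ) - t) + (n : ℤ) * 1 := by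
        push_cast [Nat.cast_sub (by omega : t ≤ n)]; ring
      rw [h3, Int.add_mul_emod_self_left]
    have h4 := hcheck0 z (Or.inr hzD)
    rw [← Finset.sum_congr rfl (fun i _ => by rw [hz, key])] at h4
    exact h4
  have hbch := bch_bound hn α hα c (n - t) (2 * t + 1) hcheck hc0
  omega
end
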